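/- arXiv:1303.6013 — 4 statements merged into one kernel-verified Lean document; each statement's English description precedes it below -/
import Mathlib

section
/- If v ≤ v' in the Bruhat order on a Coxeter group W, then for all u, w ∈ W one has u · v · w ≤ u · v' · w, where · denotes the Hecke product. -/
noncomputable section

namespace CoxeterSystem

variable {B W : Type*} [Group W] {M : CoxeterMatrix B} (cs : CoxeterSystem M W)

/-- one step of the Hecke (Demazure) product: multiply by a simple reflection -/
def heckeStep (u : W) (i : B) : W :=
  if cs.length u < cs.length (u * cs.simple i) then u * cs.simple i else u

/-- the Hecke product of `u` with the product of a word `l` -/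
def heckeWord (u : W) (l : List B) : W := l.foldl cs.heckeStep u

/-- the Hecke (Demazure) product on `W`, computed via a chosen reduced word for the
second argument -/
def heckeMul (u v : W) : W := cs.heckeWord u (cs.exists_reduced_word' v).choose

/-- the Bruhat order on `W`, via the subword property -/
def bruhatLE (u w : W) : Prop :=
  ∃ l l' : List B, cs.IsReduced l ∧ cs.wordProd l = w ∧
    l'.Sublist l ∧ cs.wordProd l' = u

/-- the (right) inversion set of `w`, as a set of reflections -/
def invSet (w : W) : Set W := {t | cs.IsRightInversion w t}

end CoxeterSystem

end

/-!
The Bruhat order is handled in its chain form: `x ≤ y` when a chain `x → x t₁ → ⋯ → y` of right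
multiplications by reflections increases the length at every step. The permutation representation
of `W` on `W × ZMod 2` gives the strong exchange property, so a chain below `y` yields a subword of
every reduced word for `y`; the converse and the lifting property (if `s` is an ascent of both
`x ≤ y` then `x s ≤ y s`) are proved together by induction on the length. Hence the chain order is
`bruhatLE`.

The lifting property makes a single Hecke step `u ↦ u · s` monotone, hence so is `u ↦ u · w`.
In the other argument, walking along a reduced word for `v` shows `u · v = u y` for some `y ≤ v`,
while `u · v'` dominates `u π(κ)` for every subword `κ` of a reduced word for `v'`; as
`y ≤ v ≤ v'`, `y` is such a `π(κ)`, so `u · v ≤ u · v'`.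
-/

noncomputable section

namespace CoxeterSystem

open scoped Classical

variable {B W : Type*} [Group W] {M : CoxeterMatrix B} (cs : CoxeterSystem M W)

local prefix:100 "s" => cs.simple
local prefix:100 "π" => cs.wordProd
local prefix:100 "ℓ" => cs.length

theorem _root_.conj_eq_iff_eq_conj_inv {G : Type*} [Group G] (a t c : G) :
    a * t * a⁻¹ = c ↔ t = a⁻¹ * c * a := by
  constructor <;> rintro rfl <;> group

-- The standard permutation representation on pairs (reflection, sign), here on all of `W × ZMod 2`
-- rather than on the reflections only.
def simpleAction (i : B) (x : W × ZMod 2) : W × ZMod 2 :=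
  (s i * x.1 * s i, x.2 + if x.1 = s i then 1 else 0)

theorem simple_mul_mul_simple_eq_simple_iff (i : B) (t : W) : s i * t * s i = s i ↔ t = s i := by
  simpa using conj_eq_iff_eq_conj_inv (s i) t (s i)

theorem simpleAction_involutive (i : B) : Function.Involutive (cs.simpleAction i) := by
  rintro ⟨t, e⟩
  simp only [simpleAction, simple_mul_mul_simple_eq_simple_iff, add_assoc]
  refine Prod.ext (by simp [mul_assoc]) ?_
  split_ifs <;> simp [CharTwo.add_self_eq_zero]

def simplePerm (i : B) : Equiv.Perm (W × ZMod 2) := (cs.simpleAction_involutive i).toPerm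

theorem simplePerm_mul_simplePerm_apply (i j : B) (t : W) (e : ZMod 2) :
    (cs.simplePerm i * cs.simplePerm j) (t, e) =
      (s i * s j * t * (s i * s j)⁻¹,
        e + ((if t = s j then 1 else 0) + if t = s j * (s i * s j) then 1 else 0)) := by
  have hcond : s j * (t * s j) = s i ↔ t = s j * (s i * s j) := by
    simpa [mul_assoc] using conj_eq_iff_eq_conj_inv (s j) t (s i)
  simp [simplePerm, simpleAction, hcond, mul_assoc, add_assoc]

theorem simplePerm_mul_simplePerm_pow_apply (i j : B) (k : ℕ) (t : W) (e : ZMod 2) :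
    ((cs.simplePerm i * cs.simplePerm j) ^ k) (t, e) =
      ((s i * s j) ^ k * t * ((s i * s j) ^ k)⁻¹,
        e + ∑ r ∈ Finset.range (2 * k), if t = s j * (s i * s j) ^ r then 1 else 0) := by
  obtain ⟨p, hp⟩ : ∃ p, p = s i * s j := ⟨_, rfl⟩
  have hshift (t : W) (r : ℕ) : p * t * p⁻¹ = s j * p ^ r ↔ t = s j * p ^ (r + 2) := by
    have hpj : p⁻¹ * s j = s j * p := by simp [hp, mul_assoc]
    have : p⁻¹ * (s j * p ^ r) * p = s j * p ^ (r + 2) := by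
      rw [← mul_assoc, hpj]
      group
    rw [conj_eq_iff_eq_conj_inv, this]
  rw [← hp]
  induction k generalizing t e with
  | zero => simp
  | succ k ih =>
    rw [pow_succ, Equiv.Perm.mul_apply, simplePerm_mul_simplePerm_apply, ← hp, ih]
    simp only [hshift, Prod.mk.injEq]
    refine ⟨by group, ?_⟩
    rw [mul_add, mul_one, Finset.sum_range_succ', Finset.sum_range_succ']
    simp only [pow_zero, mul_one, pow_one, zero_add, Nat.add_assoc, Nat.reduceAdd]
    abel

theorem isLiftable_simplePerm : M.IsLiftable cs.simplePerm := by
  intro i j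
  ext ⟨t, e⟩ : 1
  have hm : (s i * s j) ^ M i j = 1 := cs.simple_mul_simple_pow i j
  -- the reflections `s j * (s i * s j) ^ r` are `M i j`-periodic in `r`, so each is counted twice
  have hsum : ∑ r ∈ Finset.range (2 * M i j),
      (if t = s j * (s i * s j) ^ r then 1 else 0 : ZMod 2) = 0 := by
    simp only [two_mul, Finset.sum_range_add, pow_add, hm, one_mul]
    exact CharTwo.add_self_eq_zero _
  rw [simplePerm_mul_simplePerm_pow_apply, hm, hsum]
  simp

def permRep : W →* Equiv.Perm (W × ZMod 2) := cs.lift ⟨cs.simplePerm, cs.isLiftable_simplePerm⟩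

theorem permRep_wordProd (ω : List B) (t : W) (e : ZMod 2) :
    cs.permRep (π ω) (t, e) = (π ω * t * (π ω)⁻¹, e + (cs.rightInvSeq ω).count t) := by
  induction ω generalizing t e with
  | nil => simp
  | cons i ω ih =>
    have hcond : π ω * (t * (π ω)⁻¹) = s i ↔ (π ω)⁻¹ * (s i * π ω) = t := by
      simpa only [mul_assoc] using (conj_eq_iff_eq_conj_inv _ _ _).trans eq_comm
    rw [wordProd_cons, map_mul, Equiv.Perm.mul_apply, ih, permRep, lift_apply_simple]
    simp only [simplePerm, Function.Involutive.coe_toPerm, simpleAction, rightInvSeq,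
      List.count_cons, hcond, beq_iff_eq, mul_inv_rev, inv_simple, mul_assoc]
    split_ifs <;> simp [add_assoc]

def invParity (w t : W) : ZMod 2 := (cs.permRep w (t, 0)).2

theorem invParity_wordProd (ω : List B) (t : W) :
    cs.invParity (π ω) t = (cs.rightInvSeq ω).count t := by
  simp [invParity, permRep_wordProd]

theorem permRep_apply (w t : W) (e : ZMod 2) :
    cs.permRep w (t, e) = (w * t * w⁻¹, e + cs.invParity w t) := by
  obtain ⟨ω, -, rfl⟩ := cs.exists_isReduced w
  simp [permRep_wordProd, invParity_wordProd]

theorem invParity_mul (a b t : W) :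
    cs.invParity (a * b) t = cs.invParity b t + cs.invParity a (b * t * b⁻¹) := by
  have h := congrArg Prod.snd (Equiv.Perm.mul_apply (cs.permRep a) (cs.permRep b) (t, 0))
  simpa [← map_mul, permRep_apply] using h

theorem invParity_self {t : W} (ht : cs.IsReflection t) : cs.invParity t t = 1 := by
  obtain ⟨x, i, rfl⟩ := ht
  have h₁ := cs.invParity_mul x⁻¹ x (s i)
  have h₂ := cs.invParity_mul (x * s i) x⁻¹ (x * s i * x⁻¹)
  have h₃ := cs.invParity_mul x (s i) (s i)
  have hs : cs.invParity (s i) (s i) = 1 := by simpa using cs.invParity_wordProd [i] (s i)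
  have hone : cs.invParity 1 (s i) = 0 := by simpa using cs.invParity_wordProd [] (s i)
  rw [inv_mul_cancel, hone] at h₁
  rw [show x⁻¹ * (x * s i * x⁻¹) * x⁻¹⁻¹ = s i by group] at h₂
  rw [show s i * s i * (s i)⁻¹ = s i by group, hs] at h₃
  linear_combination h₂ + h₃ - h₁

theorem _root_.List.mem_of_natCast_count_ne_zero {α R : Type*} [BEq α] [LawfulBEq α]
    [AddMonoidWithOne R] {l : List α} {a : α} (h : (l.count a : R) ≠ 0) : a ∈ l :=
  List.count_pos_iff.mp (Nat.pos_of_ne_zero fun h0 => h (by simp [h0]))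

theorem invParity_eq_one_iff {w t : W} : cs.invParity w t = 1 ↔ cs.IsRightInversion w t := by
  have of_eq_one {w : W} (h : cs.invParity w t = 1) : cs.IsRightInversion w t := by
    obtain ⟨ω, hω, rfl⟩ := cs.exists_isReduced w
    rw [invParity_wordProd] at h
    exact cs.isRightInversion_of_mem_rightInvSeq hω
      (List.mem_of_natCast_count_ne_zero (R := ZMod 2) (h ▸ one_ne_zero))
  refine ⟨of_eq_one, fun ⟨ht, hlt⟩ => ?_⟩
  by_contra hne
  have h0 : cs.invParity w t = 0 := (by decide : ∀ a : ZMod 2, a ≠ 1 → a = 0) _ hne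
  -- otherwise the parity at `w * t` is odd, so `t` would be an inversion of `w * t` as well
  have hwt : cs.IsRightInversion (w * t) t := of_eq_one (by
    rw [invParity_mul, mul_inv_cancel_right, invParity_self cs ht, h0, add_zero])
  have := hwt.2
  rw [mul_assoc, ht.mul_self, mul_one] at this
  omega

theorem mem_rightInvSeq_of_isRightInversion {ω : List B} {t : W}
    (ht : cs.IsRightInversion (π ω) t) : t ∈ cs.rightInvSeq ω :=
  List.mem_of_natCast_count_ne_zero (R := ZMod 2)
    (by rw [← invParity_wordProd, cs.invParity_eq_one_iff.mpr ht]; exact one_ne_zero)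

theorem exists_wordProd_eraseIdx_eq_mul {ω : List B} {t : W}
    (ht : cs.IsRightInversion (π ω) t) : ∃ j < ω.length, π (ω.eraseIdx j) = π ω * t := by
  obtain ⟨j, hj, hget⟩ := List.mem_iff_getElem.mp (cs.mem_rightInvSeq_of_isRightInversion ht)
  rw [length_rightInvSeq] at hj
  refine ⟨j, hj, ?_⟩
  rw [← wordProd_mul_getD_rightInvSeq, List.getD_eq_getElem _ _ (by simpa using hj), hget]

theorem length_mul_simple_eq_add_one_of_lt {w : W} {i : B} (h : ℓ w < ℓ (w * s i)) :
    ℓ (w * s i) = ℓ w + 1 := by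
  have := cs.length_mul_simple w i
  omega

theorem length_mul_simple_lt_of_not_lt {w : W} {i : B} (h : ¬ℓ w < ℓ (w * s i)) :
    ℓ (w * s i) < ℓ w := by
  have := cs.length_mul_simple_ne w i
  omega

variable {cs} in
theorem IsReduced.of_concat {γ : List B} {i : B} (h : cs.IsReduced (γ ++ [i])) :
    cs.IsReduced γ := by
  simpa using h.take γ.length

variable {cs} in
theorem IsReduced.length_lt_concat {γ : List B} {i : B} (h : cs.IsReduced (γ ++ [i])) :
    ℓ (π γ) < ℓ (π γ * s i) := by
  have := h.eq
  rw [wordProd_append, wordProd_singleton] at this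
  simp [this, h.of_concat.eq]

theorem isReduced_concat_of_lt {γ : List B} {i : B} (hγ : cs.IsReduced γ)
    (h : ℓ (π γ) < ℓ (π γ * s i)) : cs.IsReduced (γ ++ [i]) := by
  rw [IsReduced, wordProd_append, wordProd_singleton, cs.length_mul_simple_eq_add_one_of_lt h,
    hγ.eq]
  simp

theorem exists_isReduced_sublist (ω : List B) :
    ∃ κ : List B, κ.Sublist ω ∧ cs.IsReduced κ ∧ π κ = π ω := by
  induction ω using List.reverseRecOn with
  | nil => exact ⟨[], .slnil, by simp [IsReduced], rfl⟩
  | append_singleton γ i ih =>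
    obtain ⟨κ, hsub, hκ, hprod⟩ := ih
    rw [wordProd_append, wordProd_singleton, ← hprod]
    by_cases hasc : ℓ (π κ) < ℓ (π κ * s i)
    · exact ⟨κ ++ [i], hsub.append (.refl _), cs.isReduced_concat_of_lt hκ hasc,
        by rw [wordProd_append, wordProd_singleton]⟩
    · obtain ⟨j, hj, heq⟩ := cs.exists_wordProd_eraseIdx_eq_mul
        ⟨cs.isReflection_simple i, cs.length_mul_simple_lt_of_not_lt hasc⟩
      have hsub' := ((κ.eraseIdx_sublist j).trans hsub).trans (List.sublist_append_left γ [i])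
      refine ⟨κ.eraseIdx j, hsub', ?_, heq⟩
      rw [IsReduced, heq, List.length_eraseIdx_of_lt hj, ← hκ.eq]
      have := cs.length_mul_simple (π κ) i
      omega

def BruhatStep (x y : W) : Prop := ∃ t, cs.IsReflection t ∧ x * t = y ∧ ℓ x < ℓ y

def ChainLE : W → W → Prop := Relation.ReflTransGen cs.BruhatStep

theorem ChainLE.refl (x : W) : cs.ChainLE x x := Relation.ReflTransGen.refl

variable {cs} in
theorem ChainLE.trans {x y z : W} (hxy : cs.ChainLE x y) (hyz : cs.ChainLE y z) : cs.ChainLE x z :=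
  Relation.ReflTransGen.trans hxy hyz

theorem chainLE_mul_simple {x : W} {i : B} (h : ℓ x < ℓ (x * s i)) : cs.ChainLE x (x * s i) :=
  .single ⟨s i, cs.isReflection_simple i, rfl, h⟩

theorem mul_simple_chainLE {x : W} {i : B} (h : ℓ (x * s i) < ℓ x) : cs.ChainLE (x * s i) x :=
  .single ⟨s i, cs.isReflection_simple i, by simp [mul_assoc], h⟩

variable {cs} in
theorem ChainLE.exists_sublist {x y : W} (h : cs.ChainLE x y) {ω : List B}
    (hω : cs.IsReduced ω) (hprod : π ω = y) :
    ∃ κ : List B, κ.Sublist ω ∧ cs.IsReduced κ ∧ π κ = x := by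
  induction h generalizing ω with
  | refl => exact ⟨ω, .refl ω, hω, hprod⟩
  | tail _ hstep ih =>
    obtain ⟨t, ht, rfl, hlt⟩ := hstep
    have hinv : cs.IsRightInversion (π ω) t :=
      ⟨ht, by rwa [hprod, mul_assoc, ht.mul_self, mul_one]⟩
    obtain ⟨j, -, hj⟩ := cs.exists_wordProd_eraseIdx_eq_mul hinv
    obtain ⟨κ', hsub', hκ', hprod'⟩ := cs.exists_isReduced_sublist (ω.eraseIdx j)
    obtain ⟨κ, hsub, hκ, hprodκ⟩ :=
      ih hκ' (by rw [hprod', hj, hprod, mul_assoc, ht.mul_self, mul_one])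
    exact ⟨κ, hsub.trans (hsub'.trans (ω.eraseIdx_sublist j)), hκ, hprodκ⟩

theorem _root_.List.sublist_concat_iff {α : Type*} {l γ : List α} {a : α} :
    l.Sublist (γ ++ [a]) ↔ l.Sublist γ ∨ ∃ l', l'.Sublist γ ∧ l = l' ++ [a] := by
  constructor
  · intro h
    obtain ⟨l₁, l₂, rfl, h₁, h₂⟩ := List.sublist_append_iff.mp h
    rcases List.sublist_singleton.mp h₂ with rfl | rfl
    · exact .inl (by simpa using h₁)
    · exact .inr ⟨l₁, h₁, rfl⟩
  · rintro (h | ⟨l', h, rfl⟩)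
    · exact h.trans (List.sublist_append_left γ [a])
    · exact h.append (.refl _)

def SubwordChainBelow (n : ℕ) : Prop :=
  ∀ ⦃ω κ : List B⦄, ω.length < n → cs.IsReduced ω → cs.IsReduced κ → κ.Sublist ω →
    cs.ChainLE (π κ) (π ω)

def LiftingBelow (n : ℕ) : Prop :=
  ∀ ⦃x y : W⦄ ⦃i : B⦄, ℓ y < n → cs.ChainLE x y → ℓ x < ℓ (x * s i) → ℓ y < ℓ (y * s i) →
    cs.ChainLE (x * s i) (y * s i)

variable {cs}

theorem SubwordChainBelow.mul_simple_chainLE_of_descent {n : ℕ} (hSC : cs.SubwordChainBelow n)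
    {x z : W} {i : B} (hz : ℓ z < n) (hdesc : ℓ (z * s i) < ℓ z) (hle : cs.ChainLE x z)
    (hasc : ℓ x < ℓ (x * s i)) : cs.ChainLE (x * s i) z := by
  obtain ⟨γ, hγ, hγprod⟩ := cs.exists_isReduced (z * s i)
  have hzγ : π γ * s i = z := by rw [← hγprod, mul_assoc, simple_mul_simple_self, mul_one]
  have hω : cs.IsReduced (γ ++ [i]) := cs.isReduced_concat_of_lt hγ (by rwa [hzγ, ← hγprod])
  have hωprod : π (γ ++ [i]) = z := by rw [wordProd_append, wordProd_singleton, hzγ]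
  obtain ⟨κ, hsub, hκ, rfl⟩ := hle.exists_sublist hω hωprod
  rcases List.sublist_concat_iff.mp hsub with hsub | ⟨κ', -, rfl⟩
  · have := hSC (by rwa [← hω.eq, hωprod]) hω (cs.isReduced_concat_of_lt hκ hasc)
      (hsub.append (.refl [i]))
    rwa [hωprod, wordProd_append, wordProd_singleton] at this
  · -- a reduced subword ending in `s i` would make `s i` a descent of `x`
    have := hκ.length_lt_concat
    rw [wordProd_append, wordProd_singleton, mul_assoc, simple_mul_simple_self, mul_one] at hasc
    omega

theorem SubwordChainBelow.succ {n : ℕ} (hSC : cs.SubwordChainBelow n) (hL : cs.LiftingBelow n) :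
    cs.SubwordChainBelow (n + 1) := by
  intro ω κ hlen hω hκ hsub
  rcases List.eq_nil_or_concat' ω with rfl | ⟨γ, i, rfl⟩
  · rw [List.sublist_nil.mp hsub]
    exact .refl cs _
  have hγ := hω.of_concat
  have hγlen : γ.length < n := by simpa using hlen
  rw [wordProd_append, wordProd_singleton]
  rcases List.sublist_concat_iff.mp hsub with hsub | ⟨κ', hsub', rfl⟩
  · exact (hSC hγlen hγ hκ hsub).trans (cs.chainLE_mul_simple hω.length_lt_concat)
  · rw [wordProd_append, wordProd_singleton]
    exact hL (by rwa [hγ.eq]) (hSC hγlen hγ hκ.of_concat hsub') hκ.length_lt_concat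
      hω.length_lt_concat

theorem LiftingBelow.succ {n : ℕ} (hL : cs.LiftingBelow n) (hSC : cs.SubwordChainBelow n) :
    cs.LiftingBelow (n + 1) := by
  intro x y i hy hle hx hyasc
  rcases Relation.ReflTransGen.cases_tail hle with rfl | ⟨z, hxz, t, ht, rfl, hzy⟩
  · exact .refl cs _
  have hz : ℓ z < n := by omega
  by_cases hzasc : ℓ z < ℓ (z * s i)
  · -- `z * s i` and `z * t * s i` differ by the reflection `s i * t * s i`
    have hstep : cs.BruhatStep (z * s i) (z * t * s i) := by
      refine ⟨s i * t * s i, by simpa using ht.conj (s i), by simp [mul_assoc], ?_⟩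
      have := cs.length_mul_simple_eq_add_one_of_lt hzasc
      have := cs.length_mul_simple_eq_add_one_of_lt hyasc
      omega
    exact (hL hz hxz hx hzasc).trans (.single hstep)
  · have hxz' := hSC.mul_simple_chainLE_of_descent hz
      (cs.length_mul_simple_lt_of_not_lt hzasc) hxz hx
    exact hxz'.trans ((Relation.ReflTransGen.single ⟨t, ht, rfl, hzy⟩).trans
      (cs.chainLE_mul_simple hyasc))

variable (cs)

theorem subwordChainBelow_and_liftingBelow : ∀ n, cs.SubwordChainBelow n ∧ cs.LiftingBelow n
  | 0 => ⟨fun _ _ h => absurd h (Nat.not_lt_zero _), fun _ _ _ h => absurd h (Nat.not_lt_zero _)⟩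
  | n + 1 =>
    have ⟨hSC, hL⟩ := subwordChainBelow_and_liftingBelow n
    ⟨hSC.succ hL, hL.succ hSC⟩

theorem chainLE_wordProd_of_sublist {ω κ : List B} (hω : cs.IsReduced ω) (hκ : cs.IsReduced κ)
    (hsub : κ.Sublist ω) : cs.ChainLE (π κ) (π ω) :=
  (cs.subwordChainBelow_and_liftingBelow _).1 (Nat.lt_succ_self ω.length) hω hκ hsub

variable {cs} in
theorem ChainLE.mul_simple_mul_simple {x y : W} {i : B} (h : cs.ChainLE x y)
    (hx : ℓ x < ℓ (x * s i)) (hy : ℓ y < ℓ (y * s i)) : cs.ChainLE (x * s i) (y * s i) :=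
  (cs.subwordChainBelow_and_liftingBelow _).2 (Nat.lt_succ_self (ℓ y)) h hx hy

variable {cs} in
theorem ChainLE.mul_simple_of_descent {x z : W} {i : B} (h : cs.ChainLE x z)
    (hz : ℓ (z * s i) < ℓ z) (hx : ℓ x < ℓ (x * s i)) : cs.ChainLE (x * s i) z :=
  (cs.subwordChainBelow_and_liftingBelow _).1.mul_simple_chainLE_of_descent
    (Nat.lt_succ_self (ℓ z)) hz h hx

theorem bruhatLE_iff_chainLE {x y : W} : cs.bruhatLE x y ↔ cs.ChainLE x y := by
  constructor
  · rintro ⟨ω, κ, hω, rfl, hsub, rfl⟩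
    obtain ⟨κ', hsub', hκ', hprod'⟩ := cs.exists_isReduced_sublist κ
    exact hprod' ▸ cs.chainLE_wordProd_of_sublist hω hκ' (hsub'.trans hsub)
  · intro h
    obtain ⟨ω, hω, rfl⟩ := cs.exists_isReduced y
    obtain ⟨κ, hsub, -, rfl⟩ := h.exists_sublist hω rfl
    exact ⟨ω, κ, hω, rfl, hsub, rfl⟩

theorem heckeStep_of_lt {u : W} {i : B} (h : ℓ u < ℓ (u * s i)) : cs.heckeStep u i = u * s i :=
  if_pos h

theorem heckeStep_of_not_lt {u : W} {i : B} (h : ¬ℓ u < ℓ (u * s i)) : cs.heckeStep u i = u :=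
  if_neg h

theorem chainLE_heckeStep (u : W) (i : B) : cs.ChainLE u (cs.heckeStep u i) := by
  by_cases h : ℓ u < ℓ (u * s i)
  · rw [cs.heckeStep_of_lt h]
    exact cs.chainLE_mul_simple h
  · rw [cs.heckeStep_of_not_lt h]
    exact .refl cs u

variable {cs} in
theorem ChainLE.heckeStep {a b : W} (h : cs.ChainLE a b) (i : B) :
    cs.ChainLE (cs.heckeStep a i) (cs.heckeStep b i) := by
  by_cases hb : ℓ b < ℓ (b * s i) <;> by_cases ha : ℓ a < ℓ (a * s i) <;>
    simp only [cs.heckeStep_of_lt, cs.heckeStep_of_not_lt, ha, hb, not_false_eq_true]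
  · exact h.mul_simple_mul_simple ha hb
  · exact h.trans (cs.chainLE_mul_simple hb)
  · exact h.mul_simple_of_descent (cs.length_mul_simple_lt_of_not_lt hb) ha
  · exact h

variable {cs} in
theorem ChainLE.mul_simple_heckeStep {a b : W} (h : cs.ChainLE a b) (i : B) :
    cs.ChainLE (a * s i) (cs.heckeStep b i) := by
  by_cases ha : ℓ a < ℓ (a * s i)
  · rw [← cs.heckeStep_of_lt ha]
    exact h.heckeStep i
  · exact (cs.mul_simple_chainLE (cs.length_mul_simple_lt_of_not_lt ha)).trans
      (h.trans (cs.chainLE_heckeStep b i))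

variable {cs} in
theorem ChainLE.heckeWord {a b : W} (h : cs.ChainLE a b) (l : List B) :
    cs.ChainLE (cs.heckeWord a l) (cs.heckeWord b l) := by
  induction l generalizing a b with
  | nil => exact h
  | cons i l ih => exact ih (h.heckeStep i)

theorem heckeWord_concat (u : W) (l : List B) (i : B) :
    cs.heckeWord u (l ++ [i]) = cs.heckeStep (cs.heckeWord u l) i := by
  simp [heckeWord]

theorem chainLE_mul_wordProd_heckeWord {κ ω : List B} (hsub : κ.Sublist ω) (u : W) :
    cs.ChainLE (u * π κ) (cs.heckeWord u ω) := by
  induction ω using List.reverseRecOn generalizing κ with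
  | nil =>
    rw [List.sublist_nil.mp hsub]
    simpa [heckeWord] using ChainLE.refl cs u
  | append_singleton γ i ih =>
    rw [heckeWord_concat]
    rcases List.sublist_concat_iff.mp hsub with hsub | ⟨κ', hsub', rfl⟩
    · exact (ih hsub).trans (cs.chainLE_heckeStep _ i)
    · rw [wordProd_append, wordProd_singleton, ← mul_assoc]
      exact (ih hsub').mul_simple_heckeStep i

theorem exists_chainLE_heckeWord_eq_mul {ω : List B} (hω : cs.IsReduced ω) (u : W) :
    ∃ y, cs.ChainLE y (π ω) ∧ cs.heckeWord u ω = u * y := by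
  induction ω using List.reverseRecOn with
  | nil => exact ⟨1, .refl cs 1, by simp [heckeWord]⟩
  | append_singleton γ i ih =>
    obtain ⟨y, hy, heq⟩ := ih hω.of_concat
    rw [heckeWord_concat, heq, wordProd_append, wordProd_singleton,
      ← cs.heckeStep_of_lt hω.length_lt_concat]
    by_cases hasc : ℓ (u * y) < ℓ (u * y * s i)
    · exact ⟨y * s i, hy.mul_simple_heckeStep i, by rw [cs.heckeStep_of_lt hasc, mul_assoc]⟩
    · exact ⟨y, hy.trans (cs.chainLE_heckeStep _ i), cs.heckeStep_of_not_lt hasc⟩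

theorem chainLE_heckeWord_of_chainLE {α β : List B} (hα : cs.IsReduced α) (hβ : cs.IsReduced β)
    (h : cs.ChainLE (π α) (π β)) (u : W) : cs.ChainLE (cs.heckeWord u α) (cs.heckeWord u β) := by
  obtain ⟨y, hy, heq⟩ := cs.exists_chainLE_heckeWord_eq_mul hα u
  obtain ⟨κ, hsub, -, rfl⟩ := (hy.trans h).exists_sublist hβ rfl
  rw [heq]
  exact cs.chainLE_mul_wordProd_heckeWord hsub u

variable {cs} in
theorem ChainLE.heckeMul_const {a b : W} (h : cs.ChainLE a b) (w : W) :
    cs.ChainLE (cs.heckeMul a w) (cs.heckeMul b w) :=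
  h.heckeWord _

variable {cs} in
theorem ChainLE.const_heckeMul {v v' : W} (h : cs.ChainLE v v') (u : W) :
    cs.ChainLE (cs.heckeMul u v) (cs.heckeMul u v') := by
  obtain ⟨hv, hvprod⟩ := (cs.exists_isReduced v).choose_spec
  obtain ⟨hv', hv'prod⟩ := (cs.exists_isReduced v').choose_spec
  exact cs.chainLE_heckeWord_of_chainLE hv hv' (by rwa [← hvprod, ← hv'prod]) u

end CoxeterSystem

end

/-- If `v ≤ v'` in Bruhat order then `u · v · w ≤ u · v' · w` for the Hecke product. -/
theorem heckeMul_mono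
    {B W : Type*} [Group W] {M : CoxeterMatrix B} (cs : CoxeterSystem M W)
    (u v v' w : W) (h : cs.bruhatLE v v') :
    cs.bruhatLE (cs.heckeMul (cs.heckeMul u v) w) (cs.heckeMul (cs.heckeMul u v') w) := by
  rw [cs.bruhatLE_iff_chainLE] at h ⊢
  exact (h.const_heckeMul u).heckeMul_const w
end

section
/- For all u, v in a Coxeter group W, the element u' = (u · v) v⁻¹ satisfies u' ≤ u in the Bruhat order, and u' v is a reduced product (ℓ(u' v) = ℓ(u') + ℓ(v)) with u' v = u · v. -/
/-!
Compute `u · v` along a reduced word `s₁ ⋯ sₖ` for `v`, maintaining a reduced factorisation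
`u' s₁ ⋯ sⱼ` of the intermediate product with `u'` a subword of a fixed reduced word for `u`. If
the next letter `s` lengthens the product, it is appended. Otherwise `s` is a right descent, the
product is unchanged, and the exchange property deletes one letter of `u' s₁ ⋯ sⱼ`: necessarily a
letter of `u'`, since `s₁ ⋯ sⱼ s` is reduced. This rewrites the product as `u'' s₁ ⋯ sⱼ s` with
`u''` a subword of `u'`. At the end `(u · v) v⁻¹ = u'` is a subword of `u`, i.e. `u' ≤ u`.

The exchange property comes from the action of `W` on `W × ℤˣ` (Björner–Brenti, Thm. 1.4.3) in
which a word `ω` flips the sign of `(t, ε)` once for every occurrence of `t` in its right inversion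
sequence.
-/

noncomputable section

open scoped Classical
open List

namespace CoxeterSystem

variable {B W : Type*} [Group W] {M : CoxeterMatrix B} (cs : CoxeterSystem M W)

local prefix:100 "s" => cs.simple
local prefix:100 "π" => cs.wordProd
local prefix:100 "ℓ" => cs.length
local prefix:100 "ris" => cs.rightInvSeq

theorem simple_conj_eq_iff (i : B) (t u : W) : s i * t * s i = u ↔ t = s i * u * s i := by
  constructor <;> rintro rfl <;> simp [mul_assoc]

def simpleFlip (i : B) : Equiv.Perm (W × ℤˣ) :=
  Function.Involutive.toPerm (fun p => (s i * p.1 * s i, p.2 * if p.1 = s i then -1 else 1)) <| by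
    rintro ⟨t, ε⟩
    refine Prod.ext ?_ ?_
    · simp [mul_assoc]
    · dsimp only
      rw [simple_conj_eq_iff, simple_mul_simple_self, one_mul, mul_assoc, Int.units_mul_self,
        mul_one]

@[simp] theorem simpleFlip_apply (i : B) (t : W) (ε : ℤˣ) :
    cs.simpleFlip i (t, ε) = (s i * t * s i, ε * if t = s i then -1 else 1) := rfl

theorem simpleFlip_mul_simpleFlip_apply (i j : B) (t : W) (ε : ℤˣ) :
    (cs.simpleFlip i * cs.simpleFlip j) (t, ε) =
      (s i * s j * t * (s i * s j)⁻¹,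
        ε * ((if t = s j then -1 else 1) * if t = s j * s i * s j then -1 else 1)) := by
  rw [Equiv.Perm.mul_apply, simpleFlip_apply, simpleFlip_apply, simple_conj_eq_iff _ j, mul_assoc]
  simp [mul_assoc]

theorem simple_mul_simple_conj_pow_mul_simple (i j : B) (c : ℕ) :
    s j * s i * ((s j * s i) ^ c * s j) * (s i * s j) = (s j * s i) ^ (c + 2) * s j := by
  rw [pow_succ, pow_succ']
  simp only [mul_assoc]

theorem simpleFlip_mul_simpleFlip_pow_apply (i j : B) (m : ℕ) (t : W) (ε : ℤˣ) :
    ((cs.simpleFlip i * cs.simpleFlip j) ^ m) (t, ε) =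
      ((s i * s j) ^ m * t * ((s i * s j) ^ m)⁻¹,
        ε * ∏ c ∈ Finset.range (2 * m), if t = (s j * s i) ^ c * s j then -1 else 1) := by
  induction m generalizing t ε with
  | zero => simp
  | succ m ih =>
    have conj_iff (c : ℕ) : s i * s j * t * (s i * s j)⁻¹ = (s j * s i) ^ c * s j ↔
        t = (s j * s i) ^ (c + 2) * s j := by
      have hinv : (s i * s j)⁻¹ = s j * s i := by rw [mul_inv_rev, inv_simple, inv_simple]
      have conj_eq_iff (u : W) : s i * s j * t * (s i * s j)⁻¹ = u ↔
          t = (s i * s j)⁻¹ * u * (s i * s j) := by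
        constructor <;> rintro rfl <;> group
      rw [conj_eq_iff, hinv, simple_mul_simple_conj_pow_mul_simple]
    rw [pow_succ, Equiv.Perm.mul_apply, simpleFlip_mul_simpleFlip_apply, ih]
    refine Prod.ext (by rw [pow_succ, mul_inv_rev ((s i * s j) ^ m)]; simp only [mul_assoc]) ?_
    simp only [conj_iff]
    rw [show 2 * (m + 1) = 2 * m + 1 + 1 by ring, Finset.prod_range_succ', Finset.prod_range_succ',
      pow_zero, one_mul, pow_one]
    simp only [mul_comm, mul_assoc]

/-- `(s j * s i) ^ c * s j` has period `M i j` in `c`, so in `2 * M i j` steps every `t` is met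
an even number of times. -/
theorem simpleFlip_mul_simpleFlip_pow_coxeterMatrix (i j : B) :
    (cs.simpleFlip i * cs.simpleFlip j) ^ M i j = 1 := by
  ext ⟨t, ε⟩ : 1
  rw [simpleFlip_mul_simpleFlip_pow_apply, simple_mul_simple_pow, two_mul,
    Finset.prod_range_add]
  simp only [pow_add, simple_mul_simple_pow', one_mul, Int.units_mul_self, mul_one, inv_one]
  rfl

def signedAction : W →* Equiv.Perm (W × ℤˣ) :=
  cs.lift ⟨cs.simpleFlip, cs.simpleFlip_mul_simpleFlip_pow_coxeterMatrix⟩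

@[simp] theorem signedAction_simple (i : B) : cs.signedAction (s i) = cs.simpleFlip i :=
  cs.lift_apply_simple cs.simpleFlip_mul_simpleFlip_pow_coxeterMatrix i

theorem signedAction_wordProd (ω : List B) (t : W) (ε : ℤˣ) :
    cs.signedAction (π ω) (t, ε) = (π ω * t * (π ω)⁻¹, ε * (-1) ^ (ris ω).count t) := by
  induction ω generalizing t ε with
  | nil => simp
  | cons i ω ih =>
    have hmem : π ω * t * (π ω)⁻¹ = s i ↔ (π ω)⁻¹ * s i * π ω = t := by
      constructor <;> intro h <;> rw [← h] <;> group
    rw [wordProd_cons, map_mul, Equiv.Perm.mul_apply, ih, signedAction_simple,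
      simpleFlip_apply, rightInvSeq, List.count_cons, hmem]
    simp only [beq_iff_eq]
    refine Prod.ext ?_ ?_
    · simp [mul_assoc]
    · split_ifs <;> simp [pow_succ]

theorem isReduced_append_singleton_iff (ω : List B) (i : B) :
    cs.IsReduced (ω ++ [i]) ↔ cs.IsReduced ω ∧ ¬cs.IsRightDescent (π ω) i := by
  have hle := cs.length_wordProd_le ω
  have hmul := cs.length_mul_simple (π ω) i
  simp only [IsReduced, wordProd_append, wordProd_singleton, length_append, length_singleton,
    not_isRightDescent_iff]
  omega

theorem IsReduced.length_wordProd_mul_wordProd {ω₁ ω₂ : List B} (h : cs.IsReduced (ω₁ ++ ω₂)) :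
    ℓ (π ω₁ * π ω₂) = ℓ (π ω₁) + ℓ (π ω₂) := by
  have h₁ := cs.length_wordProd_le ω₁
  have h₂ := cs.length_wordProd_le ω₂
  have hmul := cs.length_mul_le (π ω₁) (π ω₂)
  have hred : ℓ (π ω₁ * π ω₂) = ω₁.length + ω₂.length := by
    rw [← wordProd_append, ← length_append]; exact h
  omega

/-- Otherwise `ω` and a reduced word ending in `i` for the same element would flip the sign of
`(s i, 1)` differently. -/
theorem simple_mem_rightInvSeq_of_isRightDescent {ω : List B} {i : B}
    (h : cs.IsRightDescent (π ω) i) : s i ∈ ris ω := by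
  obtain ⟨ω', hω', hπ⟩ := cs.exists_isReduced (π ω * s i)
  have hprod : π (ω' ++ [i]) = π ω := by
    rw [wordProd_append, wordProd_singleton, ← hπ, simple_mul_simple_cancel_right]
  have hred : cs.IsReduced (ω' ++ [i]) := by
    rw [isReduced_append_singleton_iff, ← hπ, ← isRightDescent_iff_not_isRightDescent_mul]
    exact ⟨hω', h⟩
  have hmem : s i ∈ ris (ω' ++ [i]) := by
    rw [← concat_eq_append, rightInvSeq_concat, concat_eq_append]
    exact mem_append_right _ (mem_singleton_self _)
  by_contra hnot
  have hsign := congrArg Prod.snd (cs.signedAction_wordProd ω (s i) 1)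
  rw [← hprod, signedAction_wordProd, hprod, count_eq_zero_of_not_mem hnot,
    count_eq_one_of_mem hred.nodup_rightInvSeq hmem] at hsign
  simp at hsign

theorem exists_eraseIdx_of_isRightDescent {ω : List B} {i : B}
    (h : cs.IsRightDescent (π ω) i) : ∃ j < ω.length, π ω * s i = π (ω.eraseIdx j) := by
  obtain ⟨j, hj, hget⟩ := getElem_of_mem (cs.simple_mem_rightInvSeq_of_isRightDescent h)
  refine ⟨j, by simpa using hj, ?_⟩
  rw [← wordProd_mul_getD_rightInvSeq, getD_eq_getElem _ _ hj, hget]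

theorem exists_sublist_isReduced_of_isRightDescent {ω₁ ω₂ : List B} {i : B}
    (h₂ : cs.IsReduced (ω₂ ++ [i])) (h : cs.IsReduced (ω₁ ++ ω₂))
    (hd : cs.IsRightDescent (π (ω₁ ++ ω₂)) i) :
    ∃ ω₁', ω₁' <+ ω₁ ∧ cs.IsReduced (ω₁' ++ ω₂ ++ [i]) ∧ π (ω₁ ++ ω₂) = π (ω₁' ++ ω₂ ++ [i]) := by
  obtain ⟨k, hk, hexch⟩ := cs.exists_eraseIdx_of_isRightDescent hd
  rcases lt_or_ge k ω₁.length with hk₁ | hk₁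
  · have hprod : π (ω₁ ++ ω₂) = π (ω₁.eraseIdx k ++ ω₂ ++ [i]) := by
      rw [wordProd_append _ _ [i], ← eraseIdx_append_of_lt_length hk₁, ← hexch, wordProd_singleton,
        simple_mul_simple_cancel_right]
    refine ⟨ω₁.eraseIdx k, eraseIdx_sublist ω₁ k, ?_, hprod⟩
    have hlen := length_eraseIdx_add_one hk₁
    rw [IsReduced, ← hprod, h.eq]
    simp only [length_append, length_singleton]
    omega
  · -- the deleted letter would shorten the reduced word `ω₂ ++ [i]`
    exfalso
    rw [eraseIdx_append_of_length_le hk₁, wordProd_append, wordProd_append, mul_assoc] at hexch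
    have hπ : π (ω₂ ++ [i]) = π (ω₂.eraseIdx (k - ω₁.length)) := by
      rw [wordProd_append, wordProd_singleton]; exact mul_left_cancel hexch
    have hle := cs.length_wordProd_le (ω₂.eraseIdx (k - ω₁.length))
    have hlen := length_eraseIdx_le ω₂ (k - ω₁.length)
    rw [← hπ, h₂.eq, length_append, length_singleton] at hle
    omega

theorem heckeWord_append_singleton (u : W) (ω : List B) (i : B) :
    cs.heckeWord u (ω ++ [i]) = cs.heckeStep (cs.heckeWord u ω) i :=
  foldl_append ..

theorem heckeStep_of_isRightDescent {w : W} {i : B} (h : cs.IsRightDescent w i) :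
    cs.heckeStep w i = w :=
  if_neg h.asymm

theorem heckeStep_of_not_isRightDescent {w : W} {i : B} (h : ¬cs.IsRightDescent w i) :
    cs.heckeStep w i = w * s i := by
  rw [not_isRightDescent_iff] at h
  exact if_pos (by omega)

theorem exists_sublist_heckeWord_eq {ω : List B} (hω : cs.IsReduced ω) {l : List B}
    (hl : cs.IsReduced l) :
    ∃ ω', ω' <+ ω ∧ cs.IsReduced (ω' ++ l) ∧ cs.heckeWord (π ω) l = π (ω' ++ l) := by
  induction l using List.reverseRecOn with
  | nil => exact ⟨ω, Sublist.refl ω, by simpa using hω, by simp [heckeWord]⟩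
  | append_singleton l i ih =>
    obtain ⟨hl₁, -⟩ := (cs.isReduced_append_singleton_iff l i).1 hl
    obtain ⟨ω', hsub, hred, heq⟩ := ih hl₁
    rw [heckeWord_append_singleton, heq]
    by_cases hd : cs.IsRightDescent (π (ω' ++ l)) i
    · obtain ⟨ω'', hsub', hred', heq'⟩ :=
        cs.exists_sublist_isReduced_of_isRightDescent hl hred hd
      rw [heckeStep_of_isRightDescent _ hd]
      exact ⟨ω'', hsub'.trans hsub, by rwa [← append_assoc], by rw [heq', append_assoc]⟩
    · rw [heckeStep_of_not_isRightDescent _ hd]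
      refine ⟨ω', hsub, ?_, ?_⟩
      · rw [← append_assoc]
        exact (cs.isReduced_append_singleton_iff _ i).2 ⟨hred, hd⟩
      · rw [← append_assoc, wordProd_append _ _ [i], wordProd_singleton]

theorem exists_heckeMul_eq_heckeWord (u v : W) :
    ∃ l, cs.IsReduced l ∧ v = π l ∧ cs.heckeMul u v = cs.heckeWord u l :=
  ⟨_, (cs.exists_isReduced v).choose_spec.1, (cs.exists_isReduced v).choose_spec.2, rfl⟩

end CoxeterSystem

end

/-- The element `u' = (u · v) v⁻¹` satisfies `u' ≤ u`, the product `u' v` is reduced,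
and `u' v = u · v`. -/
theorem heckeMul_factor
    {B W : Type*} [Group W] {M : CoxeterMatrix B} (cs : CoxeterSystem M W)
    (u v : W) :
    cs.bruhatLE (cs.heckeMul u v * v⁻¹) u ∧
    cs.length (cs.heckeMul u v * v⁻¹ * v) =
      cs.length (cs.heckeMul u v * v⁻¹) + cs.length v ∧
    cs.heckeMul u v * v⁻¹ * v = cs.heckeMul u v := by
  obtain ⟨l, hl, rfl, hmul⟩ := cs.exists_heckeMul_eq_heckeWord u v
  obtain ⟨lu, hlu, rfl⟩ := cs.exists_isReduced u
  obtain ⟨l', hsub, hred, heq⟩ := cs.exists_sublist_heckeWord_eq hlu hl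
  have hfactor : cs.heckeMul (cs.wordProd lu) (cs.wordProd l) = cs.wordProd l' * cs.wordProd l := by
    rw [hmul, heq, CoxeterSystem.wordProd_append]
  rw [hfactor, mul_inv_cancel_right]
  exact ⟨⟨lu, l', hlu, rfl, hsub, rfl⟩, hred.length_wordProd_mul_wordProd, rfl⟩
end

section
/- The Hecke product descends to a well-defined action W × W/W_P → W/W_P given by u · (w W_P) = (u · w) W_P; i.e., if w W_P = w' W_P then (u · w) W_P = (u · w') W_P. -/
noncomputable section HeckeAux

namespace HeckeAux

set_option linter.unusedSectionVars false

open CoxeterSystem List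

variable {B W : Type*} [Group W] {M : CoxeterMatrix B} (cs : CoxeterSystem M W)

local prefix:100 "ℓ" => cs.length
local prefix:100 "π" => cs.wordProd
local prefix:100 "σ" => cs.simple
local prefix:100 "ris" => cs.rightInvSeq

open Classical in
/-- The basic involution used for the sign representation. -/
def etaFun (i : B) : W × ℤˣ → W × ℤˣ :=
  fun x => (σ i * x.1 * σ i, if x.1 = σ i then -x.2 else x.2)

lemma etaFun_involutive (i : B) : Function.Involutive (etaFun cs i) := by
  rintro ⟨t, ε⟩
  have hc : σ i * (σ i * t * σ i) * σ i = t := by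
    rw [← mul_assoc, ← mul_assoc, cs.simple_mul_simple_self, one_mul, mul_assoc,
      cs.simple_mul_simple_self, mul_one]
  by_cases h : t = σ i
  · subst h
    simp [etaFun, cs.simple_mul_simple_self]
  · have h2 : σ i * t * σ i ≠ σ i := by
      intro hc2
      apply h
      have : σ i * (σ i * t * σ i) * σ i = σ i * σ i * σ i := by rw [hc2]
      rw [hc, cs.simple_mul_simple_self, one_mul] at this
      exact this
    simp [etaFun, h, h2, hc]

def etaPerm (i : B) : Equiv.Perm (W × ℤˣ) := Function.Involutive.toPerm _ (etaFun_involutive cs i)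

lemma etaPerm_apply (i : B) (x : W × ℤˣ) : etaPerm cs i x = etaFun cs i x := rfl

lemma hsss (i i' : B) : σ i' * σ i * σ i' = (σ i * σ i')⁻¹ * σ i' := by
  rw [mul_inv_rev, cs.inv_simple, cs.inv_simple]

lemma simple_mul_pow (i i' : B) (k : ℕ) :
    σ i' * (σ i * σ i') ^ k = ((σ i * σ i') ^ k)⁻¹ * σ i' := by
  induction k with
  | zero => simp
  | succ k ih =>
    have hbase : σ i' * (σ i * σ i') = (σ i * σ i')⁻¹ * σ i' := by
      rw [← mul_assoc]; exact hsss cs i i'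
    calc σ i' * (σ i * σ i') ^ (k+1) = (σ i' * (σ i * σ i')) * (σ i * σ i') ^ k := by
          rw [pow_succ', ← mul_assoc]
      _ = (σ i * σ i')⁻¹ * (σ i' * (σ i * σ i') ^ k) := by rw [hbase, mul_assoc]
      _ = (σ i * σ i')⁻¹ * (((σ i * σ i') ^ k)⁻¹ * σ i') := by rw [ih]
      _ = ((σ i * σ i') ^ (k+1))⁻¹ * σ i' := by
          simp only [pow_succ, mul_inv_rev, cs.inv_simple, mul_assoc]

lemma gen1 (X Y t : W) : (X * t * X⁻¹ = Y) ↔ (t = X⁻¹ * Y * X) := by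
  constructor
  · intro h; rw [← h]; group
  · intro h; rw [h]; group

lemma gen2 (Z c t : W) : (Z * t = c) ↔ (t = Z⁻¹ * c) := by
  constructor
  · intro h; rw [← h]; group
  · intro h; rw [h]; group

open Classical in
lemma etaPerm_pow_apply (i i' : B) (k : ℕ) (t : W) (ε : ℤˣ) :
    ((etaPerm cs i * etaPerm cs i') ^ k) (t, ε) =
      ((σ i * σ i') ^ k * t * ((σ i * σ i') ^ k)⁻¹,
        (∏ q ∈ Finset.range (2 * k), (if (σ i * σ i') ^ q * t = σ i' then (-1 : ℤˣ) else 1)) * ε) := by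
  induction k with
  | zero => simp
  | succ k ih =>
    have key : σ i' * (σ i * σ i') ^ k = ((σ i * σ i') ^ k)⁻¹ * σ i' := simple_mul_pow cs i i' k
    have e1 : ((σ i * σ i') ^ k)⁻¹ * σ i' * (σ i * σ i') ^ k
        = ((σ i * σ i') ^ (2 * k))⁻¹ * σ i' := by
      calc ((σ i * σ i') ^ k)⁻¹ * σ i' * (σ i * σ i') ^ k
          = ((σ i * σ i') ^ k)⁻¹ * (σ i' * (σ i * σ i') ^ k) := by rw [mul_assoc]
        _ = ((σ i * σ i') ^ k)⁻¹ * (((σ i * σ i') ^ k)⁻¹ * σ i') := by rw [key]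
        _ = ((σ i * σ i') ^ k * (σ i * σ i') ^ k)⁻¹ * σ i' := by
            rw [mul_inv_rev, mul_assoc]
        _ = ((σ i * σ i') ^ (2 * k))⁻¹ * σ i' := by rw [← pow_add, two_mul]
    have e2 : ((σ i' * (σ i * σ i') ^ k)⁻¹) * σ i * (σ i' * (σ i * σ i') ^ k)
        = ((σ i * σ i') ^ (2 * k + 1))⁻¹ * σ i' := by
      have expand : ((σ i' * (σ i * σ i') ^ k)⁻¹) * σ i * (σ i' * (σ i * σ i') ^ k)
          = ((σ i * σ i') ^ k)⁻¹ * ((σ i' * σ i * σ i') * (σ i * σ i') ^ k) := by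
        rw [mul_inv_rev, cs.inv_simple]
        simp only [mul_assoc]
      rw [expand, hsss]
      calc ((σ i * σ i') ^ k)⁻¹ * ((σ i * σ i')⁻¹ * σ i' * (σ i * σ i') ^ k)
          = ((σ i * σ i') ^ k)⁻¹ * (σ i * σ i')⁻¹ * (σ i' * (σ i * σ i') ^ k) := by
            simp only [mul_assoc]
        _ = ((σ i * σ i') ^ k)⁻¹ * (σ i * σ i')⁻¹ * (((σ i * σ i') ^ k)⁻¹ * σ i') := by rw [key]
        _ = ((σ i * σ i') ^ k * ((σ i * σ i') * (σ i * σ i') ^ k))⁻¹ * σ i' := by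
            simp only [mul_inv_rev, mul_assoc]
        _ = ((σ i * σ i') ^ (2 * k + 1))⁻¹ * σ i' := by
            rw [← pow_succ', ← pow_add, show k + (k + 1) = 2 * k + 1 from by omega]
    have hcond1 : ((σ i * σ i') ^ k * t * ((σ i * σ i') ^ k)⁻¹ = σ i')
        ↔ ((σ i * σ i') ^ (2 * k) * t = σ i') := by
      rw [gen1, gen2, e1]
    have shape2 : σ i' * ((σ i * σ i') ^ k * t * ((σ i * σ i') ^ k)⁻¹) * σ i'
        = (σ i' * (σ i * σ i') ^ k) * t * (σ i' * (σ i * σ i') ^ k)⁻¹ := by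
      rw [mul_inv_rev, cs.inv_simple]
      simp only [mul_assoc]
    have hcond2 : (σ i' * ((σ i * σ i') ^ k * t * ((σ i * σ i') ^ k)⁻¹) * σ i' = σ i)
        ↔ ((σ i * σ i') ^ (2 * k + 1) * t = σ i') := by
      rw [shape2, gen1, gen2, e2]
    rw [pow_succ', Equiv.Perm.mul_apply, ih, Equiv.Perm.mul_apply, etaPerm_apply, etaPerm_apply]
    simp only [etaFun]
    have hr : 2 * (k + 1) = (2 * k) + 1 + 1 := by omega
    rw [hr, Finset.prod_range_succ, Finset.prod_range_succ]
    have hfirst : σ i * (σ i' * ((σ i * σ i') ^ k * t * ((σ i * σ i') ^ k)⁻¹) * σ i') * σ i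
        = (σ i * σ i') ^ (k+1) * t * ((σ i * σ i') ^ (k+1))⁻¹ := by
      rw [pow_succ', mul_inv_rev, mul_inv_rev, cs.inv_simple, cs.inv_simple]
      simp only [mul_assoc, mul_inv_rev]
    by_cases hA : (σ i * σ i') ^ (2 * k) * t = σ i' <;>
      by_cases hB : (σ i * σ i') ^ (2 * k + 1) * t = σ i'
    all_goals {
      refine Prod.ext ?_ ?_
      · exact hfirst
      · simp only [hcond1, hcond2, hA, hB, if_true, if_false]
        simp [mul_neg, neg_mul, mul_comm, mul_assoc, mul_left_comm]
    }


open Classical in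
lemma etaPerm_liftable : M.IsLiftable (etaPerm cs) := by
  intro i i'
  have hm : (σ i * σ i') ^ M i i' = 1 := cs.simple_mul_simple_pow i i'
  ext ⟨t, ε⟩
  · rw [etaPerm_pow_apply, hm]
    simp
  · rw [etaPerm_pow_apply]
    have h2 : (2 : ℕ) * M i i' = M i i' + M i i' := by omega
    rw [h2, Finset.prod_range_add]
    have heq : ∀ x ∈ Finset.range (M i i'),
        (if (σ i * σ i') ^ (M i i' + x) * t = σ i' then (-1 : ℤˣ) else 1)
        = (if (σ i * σ i') ^ x * t = σ i' then (-1 : ℤˣ) else 1) := by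
      intro x _
      rw [pow_add, hm, one_mul]
    rw [Finset.prod_congr rfl heq]
    have : (∏ q ∈ Finset.range (M i i'), (if (σ i * σ i') ^ q * t = σ i' then (-1 : ℤˣ) else 1)) *
        ∏ q ∈ Finset.range (M i i'), (if (σ i * σ i') ^ q * t = σ i' then (-1 : ℤˣ) else 1) = 1 := by
      rw [← Finset.prod_mul_distrib]
      apply Finset.prod_eq_one
      intro x _
      exact Int.units_mul_self _
    rw [this, one_mul]
    simp

/-- The sign representation on `W × ℤˣ`. -/
def etaHom : W →* Equiv.Perm (W × ℤˣ) := cs.lift ⟨etaPerm cs, etaPerm_liftable cs⟩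

lemma etaHom_simple (i : B) : etaHom cs (σ i) = etaPerm cs i :=
  cs.lift_apply_simple (etaPerm_liftable cs) i

open Classical in
/-- The sign of a pair `(w, t)`. -/
def eta (w t : W) : ℤˣ := (etaHom cs w (t, 1)).2

open Classical in
lemma etaHom_wordProd (ω : List B) (t : W) (ε : ℤˣ) :
    etaHom cs (π ω) (t, ε) = (π ω * t * (π ω)⁻¹,
      ((ris ω).map (fun r => if t = r then (-1 : ℤˣ) else 1)).prod * ε) := by
  induction ω with
  | nil => simp [rightInvSeq]
  | cons i ω ih =>
    rw [cs.wordProd_cons, map_mul, Equiv.Perm.mul_apply, ih, etaHom_simple, etaPerm_apply]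
    simp only [etaFun]
    have hfirst : σ i * (π ω * t * (π ω)⁻¹) * σ i
        = (σ i * π ω) * t * (σ i * π ω)⁻¹ := by
      rw [mul_inv_rev, cs.inv_simple]
      simp only [mul_assoc]
    have hcondiff : (π ω * t * (π ω)⁻¹ = σ i) ↔ (t = (π ω)⁻¹ * σ i * π ω) := gen1 _ _ _
    refine Prod.ext hfirst ?_
    rw [rightInvSeq, List.map_cons, List.prod_cons]
    by_cases hc : t = (π ω)⁻¹ * σ i * π ω
    · rw [if_pos (hcondiff.mpr hc), if_pos hc]
      simp [mul_comm, mul_assoc, mul_left_comm]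
    · rw [if_neg (fun h => hc (hcondiff.mp h)), if_neg hc]
      simp [mul_comm, mul_assoc, mul_left_comm]

open Classical in
lemma etaHom_apply (w t : W) (ε : ℤˣ) :
    etaHom cs w (t, ε) = (w * t * w⁻¹, eta cs w t * ε) := by
  obtain ⟨ω, rfl⟩ := cs.wordProd_surjective w
  rw [etaHom_wordProd]
  have h1 := etaHom_wordProd cs ω t 1
  rw [mul_one] at h1
  have : eta cs (π ω) t = ((ris ω).map (fun r => if t = r then (-1 : ℤˣ) else 1)).prod := by
    rw [eta, h1]
  rw [this]

open Classical in
lemma eta_eq_prod (ω : List B) (t : W) :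
    eta cs (π ω) t = ((ris ω).map (fun r => if t = r then (-1 : ℤˣ) else 1)).prod := by
  classical
  have h1 := etaHom_wordProd cs ω t 1
  rw [mul_one] at h1
  rw [eta, h1]

lemma eta_mul (w₁ w₂ t : W) : eta cs (w₁ * w₂) t = eta cs w₂ t * eta cs w₁ (w₂ * t * w₂⁻¹) := by
  have h1 : etaHom cs (w₁ * w₂) (t, 1)
      = (w₁ * w₂ * t * (w₁ * w₂)⁻¹, eta cs (w₁ * w₂) t * 1) := etaHom_apply cs _ t 1
  have h2 : etaHom cs (w₁ * w₂) (t, 1)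
      = (w₁ * (w₂ * t * w₂⁻¹) * w₁⁻¹, eta cs w₁ (w₂ * t * w₂⁻¹) * (eta cs w₂ t * 1)) := by
    rw [map_mul, Equiv.Perm.mul_apply, etaHom_apply, etaHom_apply]
  have h3 := congrArg Prod.snd (h1.symm.trans h2)
  simp only [mul_one] at h3
  rw [h3, mul_comm]

lemma eta_one (t : W) : eta cs 1 t = 1 := by
  rw [eta, map_one]
  rfl

lemma eta_simple_self (i : B) : eta cs (σ i) (σ i) = -1 := by
  rw [eta, etaHom_simple, etaPerm_apply]
  simp [etaFun]

lemma eta_reflection_self {t : W} (ht : cs.IsReflection t) : eta cs t t = -1 := by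
  obtain ⟨w, i, rfl⟩ := ht
  have c1 : eta cs w (σ i) * eta cs w⁻¹ (w * σ i * w⁻¹) = 1 := by
    have := eta_mul cs w⁻¹ w (σ i)
    rw [inv_mul_cancel, eta_one] at this
    exact this.symm
  have hinner : (σ i * w⁻¹) * (w * σ i * w⁻¹) * (σ i * w⁻¹)⁻¹ = σ i := by
    rw [mul_inv_rev, inv_inv, cs.inv_simple]
    calc σ i * w⁻¹ * (w * σ i * w⁻¹) * (w * σ i)
        = σ i * (w⁻¹ * w) * σ i * (w⁻¹ * w) * σ i := by simp only [mul_assoc]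
      _ = σ i := by simp [cs.simple_mul_simple_self, mul_assoc, cs.simple_mul_simple_cancel_left]
  have c2 : eta cs (w * σ i * w⁻¹) (w * σ i * w⁻¹)
      = eta cs (σ i * w⁻¹) (w * σ i * w⁻¹) * eta cs w (σ i) := by
    have h := eta_mul cs w (σ i * w⁻¹) (w * σ i * w⁻¹)
    rw [hinner, ← mul_assoc] at h
    exact h
  have c3 : eta cs (σ i * w⁻¹) (w * σ i * w⁻¹)
      = eta cs w⁻¹ (w * σ i * w⁻¹) * eta cs (σ i) (σ i) := by
    have h := eta_mul cs (σ i) w⁻¹ (w * σ i * w⁻¹)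
    have hinner2 : w⁻¹ * (w * σ i * w⁻¹) * w⁻¹⁻¹ = σ i := by
      rw [inv_inv]
      calc w⁻¹ * (w * σ i * w⁻¹) * w = (w⁻¹ * w) * σ i * (w⁻¹ * w) := by simp only [mul_assoc]
        _ = σ i := by simp
    rw [hinner2] at h
    exact h
  rw [c2, c3, eta_simple_self]
  calc eta cs w⁻¹ (w * σ i * w⁻¹) * -1 * eta cs w (σ i)
      = -(eta cs w (σ i) * eta cs w⁻¹ (w * σ i * w⁻¹)) := by
        rw [mul_neg_one, neg_mul, mul_comm]
    _ = -1 := by rw [c1]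

open Classical in
lemma prod_map_sign_of_not_mem {t : W} {L : List W} (h : t ∉ L) :
    (L.map (fun r => if t = r then (-1 : ℤˣ) else 1)).prod = 1 := by
  classical
  induction L with
  | nil => simp
  | cons a L ih =>
    simp only [List.mem_cons, not_or] at h
    rw [List.map_cons, List.prod_cons, if_neg h.1, ih h.2, one_mul]

open Classical in
lemma prod_map_sign_of_nodup_mem {t : W} {L : List W} (hnd : L.Nodup) (h : t ∈ L) :
    (L.map (fun r => if t = r then (-1 : ℤˣ) else 1)).prod = -1 := by
  classical
  induction L with
  | nil => simp at h
  | cons a L ih =>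
    rw [List.map_cons, List.prod_cons]
    rcases List.mem_cons.mp h with rfl | hmem
    · rw [if_pos rfl, prod_map_sign_of_not_mem (List.nodup_cons.mp hnd).1]
      simp
    · have hne : t ≠ a := by
        rintro rfl
        exact (List.nodup_cons.mp hnd).1 hmem
      rw [if_neg hne, ih (List.nodup_cons.mp hnd).2 hmem, one_mul]

/-- `t` is a right inversion of `w` iff `eta cs w t = -1`. -/
lemma eta_eq_neg_one_iff {w t : W} (ht : cs.IsReflection t) :
    eta cs w t = -1 ↔ ℓ (w * t) < ℓ w := by
  constructor
  · intro h
    obtain ⟨ω, hω, rfl⟩ := cs.exists_reduced_word' w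
    rw [eta_eq_prod] at h
    by_cases hmem : t ∈ ris ω
    · exact (cs.isRightInversion_of_mem_rightInvSeq hω hmem).2
    · rw [prod_map_sign_of_not_mem hmem] at h
      exact absurd h (by
        intro hcon
        have := congrArg (Units.val) hcon
        norm_num at this)
  · intro h
    rcases Int.units_eq_one_or (eta cs w t) with h1 | h1
    · exfalso
      have h2 : eta cs (w * t) t = -1 := by
        rw [eta_mul]
        have htt : t * t * t⁻¹ = t := by
          rw [ht.inv, ht.mul_self, one_mul]
        rw [htt, h1, eta_reflection_self cs ht, mul_one]
      obtain ⟨ω, hω, hw⟩ := cs.exists_reduced_word' (w * t)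
      rw [hw, eta_eq_prod] at h2
      by_cases hmem : t ∈ ris ω
      · have := (cs.isRightInversion_of_mem_rightInvSeq hω hmem).2
        rw [← hw, mul_assoc, ht.mul_self, mul_one] at this
        omega
      · rw [prod_map_sign_of_not_mem hmem] at h2
        exact absurd h2 (by
          intro hcon
          have := congrArg (Units.val) hcon
          norm_num at this)
    · exact h1

lemma mem_rightInvSeq_of_lt {ω : List B} {t : W} (ht : cs.IsReflection t)
    (h : ℓ (π ω * t) < ℓ (π ω)) : t ∈ ris ω := by
  classical
  have heta : eta cs (π ω) t = -1 := (eta_eq_neg_one_iff cs ht).mpr h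
  rw [eta_eq_prod] at heta
  by_contra hmem
  rw [prod_map_sign_of_not_mem hmem] at heta
  exact absurd heta (by
    intro hcon
    have := congrArg (Units.val) hcon
    norm_num at this)

/-- Strong exchange property. -/
lemma strong_exchange {ω : List B} {t : W} (ht : cs.IsReflection t)
    (h : ℓ (π ω * t) < ℓ (π ω)) :
    ∃ j < ω.length, π ω * t = π (ω.eraseIdx j) := by
  have hmem := mem_rightInvSeq_of_lt cs ht h
  obtain ⟨j, hj, hget⟩ := List.getElem_of_mem hmem
  have hjlen : j < ω.length := by
    rw [← cs.length_rightInvSeq ω]; exact hj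
  refine ⟨j, hjlen, ?_⟩
  have hgd : (ris ω).getD j 1 = t := by
    rw [List.getD_eq_getElem _ _ hj, hget]
  rw [← hgd, cs.wordProd_mul_getD_rightInvSeq]


/-! ### Bruhat order -/

/-- One step of the Bruhat order. -/
def BRel (x y : W) : Prop :=
  ∃ t, cs.IsReflection t ∧ y = x * t ∧ ℓ x < ℓ y

/-- The Bruhat order, as the reflexive-transitive closure of `BRel`. -/
def brle (x y : W) : Prop := Relation.ReflTransGen (BRel cs) x y

lemma brle_refl (x : W) : brle cs x x := Relation.ReflTransGen.refl

lemma brle_trans {x y z : W} (h1 : brle cs x y) (h2 : brle cs y z) : brle cs x z :=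
  Relation.ReflTransGen.trans h1 h2

lemma brle_of_brel {x y : W} (h : BRel cs x y) : brle cs x y :=
  Relation.ReflTransGen.single h

lemma length_le_of_brle {x y : W} (h : brle cs x y) : ℓ x ≤ ℓ y := by
  induction h with
  | refl => exact le_rfl
  | tail _ hrel ih =>
    obtain ⟨t, _, rfl, hlt⟩ := hrel
    omega

lemma eq_of_brle_of_length_ge {x y : W} (h : brle cs x y) (hl : ℓ y ≤ ℓ x) : x = y := by
  rcases (Relation.ReflTransGen.cases_tail h) with rfl | ⟨c, hxc, hrel⟩
  · rfl
  · obtain ⟨t, _, rfl, hlt⟩ := hrel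
    have := length_le_of_brle cs hxc
    omega

lemma brle_antisymm {x y : W} (h1 : brle cs x y) (h2 : brle cs y x) : x = y :=
  eq_of_brle_of_length_ge cs h1 (length_le_of_brle cs h2)

lemma brle_mul_refl_of_lt {x t : W} (ht : cs.IsReflection t) (h : ℓ x < ℓ (x * t)) :
    brle cs x (x * t) :=
  brle_of_brel cs ⟨t, ht, rfl, h⟩

lemma brle_mul_refl_of_gt {x t : W} (ht : cs.IsReflection t) (h : ℓ (x * t) < ℓ x) :
    brle cs (x * t) x := by
  have : (x * t) * t = x := by rw [mul_assoc, ht.mul_self, mul_one]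
  refine brle_of_brel cs ⟨t, ht, this.symm, ?_⟩
  exact h

lemma brle_one_iff {x : W} : brle cs x 1 ↔ x = 1 := by
  constructor
  · intro h
    have := length_le_of_brle cs h
    rw [cs.length_one] at this
    exact (cs.length_eq_zero_iff).mp (Nat.le_zero.mp this)
  · rintro rfl; exact brle_refl cs 1

/-- Every word contains a reduced sublist with the same product. -/
lemma exists_reduced_sublist (ω : List B) :
    ∃ κ, κ.Sublist ω ∧ cs.IsReduced κ ∧ π κ = π ω := by
  induction ω using List.reverseRecOn with
  | nil => exact ⟨[], List.Sublist.refl _, by simp [CoxeterSystem.IsReduced], by simp⟩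
  | append_singleton ω c ih =>
    obtain ⟨κ, hsub, hred, hprod⟩ := ih
    by_cases hr : cs.IsReduced (κ ++ [c])
    · exact ⟨κ ++ [c], hsub.append (List.Sublist.refl _), hr,
        by rw [cs.wordProd_append, cs.wordProd_append, hprod]⟩
    · have h1 : ℓ (π κ) = κ.length := hred
      have hprod2 : π (κ ++ [c]) = π κ * σ c := by rw [cs.wordProd_append]; simp
      have hdesc : ℓ (π κ * σ c) < ℓ (π κ) := by
        rcases cs.length_mul_simple (π κ) c with h | h
        · exfalso
          apply hr
          show ℓ (π (κ ++ [c])) = (κ ++ [c]).length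
          rw [hprod2, h, h1]
          simp
        · omega
      obtain ⟨j, hj, hex⟩ := strong_exchange cs (cs.isReflection_simple c) hdesc
      refine ⟨κ.eraseIdx j, ?_, ?_, ?_⟩
      · exact ((κ.eraseIdx_sublist j).trans hsub).trans (List.sublist_append_left _ _)
      · show ℓ (π (κ.eraseIdx j)) = (κ.eraseIdx j).length
        rw [← hex]
        have hlen2 : (κ.eraseIdx j).length = κ.length - 1 := by
          rw [List.length_eraseIdx]
          simp [hj]
        rw [hlen2]
        rcases cs.length_mul_simple (π κ) c with hh | hh <;> omega
      · rw [← hex, hprod, cs.wordProd_append, cs.wordProd_singleton]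

/-- Going down in Bruhat order: reduced subwords exist in any reduced word. -/
lemma exists_reduced_sublist_of_brle {u w : W} (h : brle cs u w) :
    ∀ ω : List B, cs.IsReduced ω → π ω = w →
      ∃ κ, κ.Sublist ω ∧ cs.IsReduced κ ∧ π κ = u := by
  induction h using Relation.ReflTransGen.head_induction_on with
  | refl => exact fun ω hred hprod => ⟨ω, List.Sublist.refl _, hred, hprod⟩
  | head hrel _ ih =>
    intro ω hred hprod
    rename_i x y hyw
    obtain ⟨t, ht, rfl, hlt⟩ := hrel
    obtain ⟨κy, hsuby, hredy, hprody⟩ := ih ω hred hprod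
    have hdesc : ℓ (π κy * t) < ℓ (π κy) := by
      rw [hprody]
      have hxt : x * t * t = x := by rw [mul_assoc, ht.mul_self, mul_one]
      rw [hxt]
      exact hlt
    obtain ⟨j, hj, hex⟩ := strong_exchange cs ht hdesc
    have hxeq : π (κy.eraseIdx j) = x := by
      rw [← hex, hprody, mul_assoc, ht.mul_self, mul_one]
    obtain ⟨κ, hsub, hred2, hprod2⟩ := exists_reduced_sublist cs (κy.eraseIdx j)
    exact ⟨κ, (hsub.trans (κy.eraseIdx_sublist j)).trans hsuby, hred2, by rw [hprod2, hxeq]⟩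

lemma isReduced_append_singleton {ω : List B} {c : B} (h : cs.IsReduced (ω ++ [c])) :
    cs.IsReduced ω := by
  have h1 : ℓ (π (ω ++ [c])) = (ω ++ [c]).length := h
  simp only [List.length_append, List.length_singleton] at h1
  have h2 : π (ω ++ [c]) = π ω * σ c := by rw [cs.wordProd_append]; simp
  rw [h2] at h1
  have hle := cs.length_wordProd_le ω
  show ℓ (π ω) = ω.length
  rcases cs.length_mul_simple (π ω) c with hh | hh <;> omega

lemma length_wordProd_append_singleton {ω : List B} {c : B} (h : cs.IsReduced (ω ++ [c])) :
    ℓ (π ω) < ℓ (π ω * σ c) ∧ π (ω ++ [c]) = π ω * σ c ∧ ℓ (π ω) = ω.length := by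
  have h2 : π (ω ++ [c]) = π ω * σ c := by rw [cs.wordProd_append]; simp
  have h1 : ℓ (π ω * σ c) = ω.length + 1 := by rw [← h2, h]; simp
  have h3 : ℓ (π ω) = ω.length := isReduced_append_singleton cs h
  exact ⟨by omega, h2, h3⟩

lemma sublist_append_singleton_cases {κ ω : List B} {c : B} (h : κ.Sublist (ω ++ [c])) :
    κ.Sublist ω ∨ ∃ κ₁, κ = κ₁ ++ [c] ∧ κ₁.Sublist ω := by
  rw [List.sublist_append_iff] at h
  obtain ⟨l₁, l₂, rfl, hl₁, hl₂⟩ := h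
  rcases List.sublist_singleton.mp hl₂ with rfl | rfl
  · left; simpa using hl₁
  · right; exact ⟨l₁, rfl, hl₁⟩


/-- Subword property statement at level `n`. -/
def StT (n : ℕ) : Prop := ∀ ω κ : List B, cs.IsReduced ω → ℓ (π ω) = n →
  κ.Sublist ω → cs.IsReduced κ → brle cs (π κ) (π ω)

/-- Ascent monotonicity at level `n`. -/
def StAM (n : ℕ) : Prop := ∀ (y u : W) (i : B), ℓ (y * σ i) = n →
  ℓ y < ℓ (y * σ i) → brle cs u y → ℓ u < ℓ (u * σ i) → brle cs (u * σ i) (y * σ i)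

/-- Lifting property, clause 1, at level `n`. -/
def StD1 (n : ℕ) : Prop := ∀ (w u : W) (i : B), ℓ w = n →
  ℓ (w * σ i) < ℓ w → brle cs u w → brle cs (u * σ i) w

/-- Lifting property, clause 2, at level `n`. -/
def StZ2 (n : ℕ) : Prop := ∀ (w u : W) (i : B), ℓ w = n →
  ℓ (w * σ i) < ℓ w → brle cs u w → ℓ u < ℓ (u * σ i) → brle cs u (w * σ i)

/-- Lifting property, clause 3, at level `n`. -/
def StZ3 (n : ℕ) : Prop := ∀ (w u : W) (i : B), ℓ w = n →
  ℓ (w * σ i) < ℓ w → brle cs u w → ℓ (u * σ i) < ℓ u → brle cs (u * σ i) (w * σ i)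

lemma simple_conj_reflection {t : W} (ht : cs.IsReflection t) (i : B) :
    cs.IsReflection (σ i * t * σ i) := by
  have := ht.conj (σ i)
  rwa [cs.inv_simple] at this

theorem mutual_induction (n : ℕ) :
    StT cs n ∧ StAM cs n ∧ StD1 cs n ∧ StZ2 cs n ∧ StZ3 cs n := by
  induction n using Nat.strong_induction_on with
  | _ n IH =>
  -- Ascent monotonicity
  have hAM : StAM cs n := by
    suffices H : ∀ d : ℕ, ∀ (y u : W) (i : B), ℓ y - ℓ u ≤ d → ℓ (y * σ i) = n →
        ℓ y < ℓ (y * σ i) → brle cs u y → ℓ u < ℓ (u * σ i) →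
        brle cs (u * σ i) (y * σ i) by
      intro y u i h1 h2 h3 h4
      exact H (ℓ y - ℓ u) y u i le_rfl h1 h2 h3 h4
    intro d
    induction d with
    | zero =>
      intro y u i hd h1 h2 hu hasc
      have hle := length_le_of_brle cs hu
      have : u = y := eq_of_brle_of_length_ge cs hu (by omega)
      subst this
      exact brle_refl cs _
    | succ d ihd =>
      intro y u i hd h1 h2 hu hasc
      rcases Relation.ReflTransGen.cases_tail hu with heq | ⟨z, huz, hrel⟩
      · subst heq
        exact brle_refl cs _
      · obtain ⟨t, ht, hy, hlt⟩ := hrel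
        subst hy
        by_cases hzu : u = z
        · subst hzu
          -- single step case
          refine brle_of_brel cs ⟨σ i * t * σ i, simple_conj_reflection cs ht i, ?_, ?_⟩
          · simp [mul_assoc, cs.simple_mul_simple_cancel_left]
          · have e1 : ℓ (u * σ i) ≤ ℓ u + 1 := by
              rcases cs.length_mul_simple u i with hh | hh <;> omega
            omega
        · have hlu : ℓ u < ℓ z := by
            have hle := length_le_of_brle cs huz
            rcases Nat.lt_or_ge (ℓ u) (ℓ z) with hlt2 | hge
            · exact hlt2
            · exact absurd (eq_of_brle_of_length_ge cs huz (by omega)) hzu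
          by_cases hza : ℓ z < ℓ (z * σ i)
          · -- ascent at z
            have hm : ℓ (z * σ i) < n := by
              have : ℓ (z * σ i) ≤ ℓ z + 1 := by
                rcases cs.length_mul_simple z i with hh | hh <;> omega
              omega
            have step1 : brle cs (u * σ i) (z * σ i) :=
              (IH (ℓ (z * σ i)) hm).2.1 z u i rfl hza huz hasc
            have step2 : brle cs (z * σ i) (z * t * σ i) := by
              refine ihd (z * t) z i (by omega) h1 h2 ?_ hza
              exact brle_of_brel cs ⟨t, ht, rfl, hlt⟩
            exact brle_trans cs step1 step2
          · have hdesc : ℓ (z * σ i) < ℓ z := by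
              have := cs.length_mul_simple_ne z i
              omega
            have hm : ℓ z < n := by omega
            have husz : brle cs (u * σ i) z :=
              (IH (ℓ z) hm).2.2.1 z u i rfl hdesc huz
            have h5 : brle cs z (z * t) := brle_of_brel cs ⟨t, ht, rfl, hlt⟩
            have h6 : brle cs (z * t) (z * t * σ i) :=
              brle_mul_refl_of_lt cs (cs.isReflection_simple i) h2
            exact brle_trans cs (brle_trans cs husz h5) h6
  -- Lifting clause 1
  have hD1 : StD1 cs n := by
    intro w u i hn hdesc hu
    obtain ⟨ω₁, hred₁, hprod₁⟩ := cs.exists_reduced_word' (w * σ i)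
    have hlen₁ : ℓ (w * σ i) = n - 1 ∧ 1 ≤ n := by
      have := cs.length_mul_simple w i
      constructor <;> omega
    have hprodω : π (ω₁ ++ [i]) = w := by
      rw [cs.wordProd_append, cs.wordProd_singleton, ← hprod₁, mul_assoc,
        cs.simple_mul_simple_self, mul_one]
    have hredω : cs.IsReduced (ω₁ ++ [i]) := by
      show ℓ (π (ω₁ ++ [i])) = (ω₁ ++ [i]).length
      rw [hprodω]
      have hl1 : ω₁.length = ℓ (w * σ i) := by rw [hprod₁, hred₁]
      simp only [List.length_append, List.length_singleton]
      omega
    obtain ⟨κ, hsub, hredκ, hprodκ⟩ :=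
      exists_reduced_sublist_of_brle cs hu (ω₁ ++ [i]) hredω hprodω
    have hT := (IH (n - 1) (by omega)).1
    have hlν : ℓ (π ω₁) = n - 1 := by rw [← hprod₁]; exact hlen₁.1
    rcases sublist_append_singleton_cases hsub with hsubω | ⟨κ₁, rfl, hsubκ⟩
    · have hle : brle cs u (w * σ i) := by
        have h := hT ω₁ κ hred₁ hlν hsubω hredκ
        rw [hprodκ, ← hprod₁] at h
        exact h
      by_cases hasc : ℓ u < ℓ (u * σ i)
      · have hcan : (w * σ i) * σ i = w := by
          rw [mul_assoc, cs.simple_mul_simple_self, mul_one]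
        have := hAM (w * σ i) u i (by rw [hcan]; exact hn) (by rw [hcan]; exact hdesc) hle hasc
        rwa [hcan] at this
      · have hdesc2 : ℓ (u * σ i) < ℓ u := by
          have := cs.length_mul_simple_ne u i
          omega
        exact brle_trans cs (brle_mul_refl_of_gt cs (cs.isReflection_simple i) hdesc2) hu
    · have hsplit := length_wordProd_append_singleton cs hredκ
      have hus : u * σ i = π κ₁ := by
        rw [← hprodκ, hsplit.2.1, mul_assoc, cs.simple_mul_simple_self, mul_one]
      have h := hT ω₁ κ₁ hred₁ hlν hsubκ (isReduced_append_singleton cs hredκ)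
      rw [← hus, ← hprod₁] at h
      exact brle_trans cs h (brle_mul_refl_of_gt cs (cs.isReflection_simple i) hdesc)
  -- Lifting clause 2
  have hZ2 : StZ2 cs n := by
    intro w u i hn hdesc hu hasc
    obtain ⟨ω₁, hred₁, hprod₁⟩ := cs.exists_reduced_word' (w * σ i)
    have hlen₁ : ℓ (w * σ i) = n - 1 ∧ 1 ≤ n := by
      have := cs.length_mul_simple w i
      constructor <;> omega
    have hprodω : π (ω₁ ++ [i]) = w := by
      rw [cs.wordProd_append, cs.wordProd_singleton, ← hprod₁, mul_assoc,
        cs.simple_mul_simple_self, mul_one]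
    have hredω : cs.IsReduced (ω₁ ++ [i]) := by
      show ℓ (π (ω₁ ++ [i])) = (ω₁ ++ [i]).length
      rw [hprodω]
      have hl1 : ω₁.length = ℓ (w * σ i) := by rw [hprod₁, hred₁]
      simp only [List.length_append, List.length_singleton]
      omega
    obtain ⟨κ, hsub, hredκ, hprodκ⟩ :=
      exists_reduced_sublist_of_brle cs hu (ω₁ ++ [i]) hredω hprodω
    have hT := (IH (n - 1) (by omega)).1
    have hlν : ℓ (π ω₁) = n - 1 := by rw [← hprod₁]; exact hlen₁.1
    rcases sublist_append_singleton_cases hsub with hsubω | ⟨κ₁, rfl, hsubκ⟩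
    · have h := hT ω₁ κ hred₁ hlν hsubω hredκ
      rw [hprodκ, ← hprod₁] at h
      exact h
    · exfalso
      have hsplit := length_wordProd_append_singleton cs hredκ
      have hus : u = π κ₁ * σ i := by rw [← hprodκ, hsplit.2.1]
      have : ℓ (u * σ i) < ℓ u := by
        rw [hus, mul_assoc, cs.simple_mul_simple_self, mul_one]
        exact hus ▸ hsplit.1
      omega
  -- Lifting clause 3
  have hZ3 : StZ3 cs n := by
    intro w u i hn hdesc hu hdesc2
    obtain ⟨ω₁, hred₁, hprod₁⟩ := cs.exists_reduced_word' (w * σ i)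
    have hlen₁ : ℓ (w * σ i) = n - 1 ∧ 1 ≤ n := by
      have := cs.length_mul_simple w i
      constructor <;> omega
    have hprodω : π (ω₁ ++ [i]) = w := by
      rw [cs.wordProd_append, cs.wordProd_singleton, ← hprod₁, mul_assoc,
        cs.simple_mul_simple_self, mul_one]
    have hredω : cs.IsReduced (ω₁ ++ [i]) := by
      show ℓ (π (ω₁ ++ [i])) = (ω₁ ++ [i]).length
      rw [hprodω]
      have hl1 : ω₁.length = ℓ (w * σ i) := by rw [hprod₁, hred₁]
      simp only [List.length_append, List.length_singleton]
      omega
    obtain ⟨κ, hsub, hredκ, hprodκ⟩ :=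
      exists_reduced_sublist_of_brle cs hu (ω₁ ++ [i]) hredω hprodω
    have hT := (IH (n - 1) (by omega)).1
    have hlν : ℓ (π ω₁) = n - 1 := by rw [← hprod₁]; exact hlen₁.1
    rcases sublist_append_singleton_cases hsub with hsubω | ⟨κ₁, rfl, hsubκ⟩
    · have h := hT ω₁ κ hred₁ hlν hsubω hredκ
      rw [hprodκ, ← hprod₁] at h
      exact brle_trans cs (brle_mul_refl_of_gt cs (cs.isReflection_simple i) hdesc2) h
    · have hsplit := length_wordProd_append_singleton cs hredκ
      have hus : u * σ i = π κ₁ := by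
        rw [← hprodκ, hsplit.2.1, mul_assoc, cs.simple_mul_simple_self, mul_one]
      have h := hT ω₁ κ₁ hred₁ hlν hsubκ (isReduced_append_singleton cs hredκ)
      rw [← hus, ← hprod₁] at h
      exact h
  -- Subword property
  have hT : StT cs n := by
    intro ω κ hredω hn hsub hredκ
    rcases List.eq_nil_or_concat ω with rfl | ⟨ω₁, c, rfl⟩
    · rw [List.sublist_nil.mp hsub]
      exact brle_refl cs _
    · rw [List.concat_eq_append] at hredω hn hsub ⊢
      have hsplitω := length_wordProd_append_singleton cs hredω
      have hT' := (IH (n - 1) (by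
        have : ℓ (π (ω₁ ++ [c])) = (ω₁ ++ [c]).length := hredω
        simp only [List.length_append, List.length_singleton] at this
        omega)).1
      have hlν : ℓ (π ω₁) = n - 1 := by
        have h1 : ℓ (π (ω₁ ++ [c])) = (ω₁ ++ [c]).length := hredω
        simp only [List.length_append, List.length_singleton] at h1
        omega
      rcases sublist_append_singleton_cases hsub with hsubω | ⟨κ₁, rfl, hsubκ⟩
      · have h := hT' ω₁ κ (isReduced_append_singleton cs hredω) hlν hsubω hredκ
        refine brle_trans cs h ?_
        rw [hsplitω.2.1]
        exact brle_mul_refl_of_lt cs (cs.isReflection_simple c) hsplitω.1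
      · have hsplitκ := length_wordProd_append_singleton cs hredκ
        have h := hT' ω₁ κ₁ (isReduced_append_singleton cs hredω) hlν hsubκ
          (isReduced_append_singleton cs hredκ)
        have := hAM (π ω₁) (π κ₁) c (by rw [← hsplitω.2.1]; exact hn) hsplitω.1 h hsplitκ.1
        rw [← hsplitω.2.1, ← hsplitκ.2.1] at this
        exact this
  exact ⟨hT, hAM, hD1, hZ2, hZ3⟩

/-- Subword property. -/
lemma brle_of_sublist {ω κ : List B} (hredω : cs.IsReduced ω) (hsub : κ.Sublist ω)
    (hredκ : cs.IsReduced κ) : brle cs (π κ) (π ω) :=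
  (mutual_induction cs (ℓ (π ω))).1 ω κ hredω rfl hsub hredκ

/-- Lifting property, clause 1. -/
lemma brle_mul_simple_of_brle {w u : W} {i : B} (hdesc : ℓ (w * σ i) < ℓ w)
    (hu : brle cs u w) : brle cs (u * σ i) w :=
  (mutual_induction cs (ℓ w)).2.2.1 w u i rfl hdesc hu

/-- Lifting property, clause 2. -/
lemma brle_mul_simple_right_of_brle {w u : W} {i : B} (hdesc : ℓ (w * σ i) < ℓ w)
    (hu : brle cs u w) (hasc : ℓ u < ℓ (u * σ i)) : brle cs u (w * σ i) :=
  (mutual_induction cs (ℓ w)).2.2.2.1 w u i rfl hdesc hu hasc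

/-- Lifting property, clause 3. -/
lemma brle_mul_simple_mul_simple_of_brle {w u : W} {i : B} (hdesc : ℓ (w * σ i) < ℓ w)
    (hu : brle cs u w) (hdesc2 : ℓ (u * σ i) < ℓ u) : brle cs (u * σ i) (w * σ i) :=
  (mutual_induction cs (ℓ w)).2.2.2.2 w u i rfl hdesc hu hdesc2


/-! ### The Demazure product: characterization and well-definedness -/

lemma heckeWord_append (u : W) (l l' : List B) :
    cs.heckeWord u (l ++ l') = cs.heckeWord (cs.heckeWord u l) l' := by
  rw [CoxeterSystem.heckeWord, CoxeterSystem.heckeWord, CoxeterSystem.heckeWord,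
    List.foldl_append]

lemma heckeWord_nil (u : W) : cs.heckeWord u [] = u := rfl

lemma heckeWord_singleton (u : W) (c : B) : cs.heckeWord u [c] = cs.heckeStep u c := rfl

lemma heckeStep_of_lt {u : W} {i : B} (h : ℓ u < ℓ (u * σ i)) :
    cs.heckeStep u i = u * σ i := if_pos h

lemma heckeStep_of_gt {u : W} {i : B} (h : ℓ (u * σ i) < ℓ u) :
    cs.heckeStep u i = u := if_neg (by omega)

lemma heckeStep_descent (u : W) (i : B) :
    ℓ (cs.heckeStep u i * σ i) < ℓ (cs.heckeStep u i) := by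
  have hne := cs.length_mul_simple_ne u i
  rcases Nat.lt_or_ge (ℓ u) (ℓ (u * σ i)) with h | h
  · rw [heckeStep_of_lt cs h, mul_assoc, cs.simple_mul_simple_self, mul_one]
    exact h
  · rw [heckeStep_of_gt cs (by omega)]
    omega

lemma brle_heckeStep (u : W) (i : B) : brle cs u (cs.heckeStep u i) := by
  rcases Nat.lt_or_ge (ℓ u) (ℓ (u * σ i)) with h | h
  · rw [heckeStep_of_lt cs h]
    exact brle_mul_refl_of_lt cs (cs.isReflection_simple i) h
  · rw [heckeStep_of_gt cs (by have := cs.length_mul_simple_ne u i; omega)]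
    exact brle_refl cs u

/-- Characterization of the Hecke word product: `cs.heckeWord u ω` is the Bruhat-maximum
of the set `{u * v' : v' ≤ π ω}`, for `ω` reduced. -/
theorem heckeWord_char (ω : List B) (hred : cs.IsReduced ω) (u : W) :
    (∃ v', brle cs v' (π ω) ∧ cs.heckeWord u ω = u * v') ∧
      (∀ v', brle cs v' (π ω) → brle cs (u * v') (cs.heckeWord u ω)) := by
  induction ω using List.reverseRecOn generalizing u with
  | nil =>
    constructor
    · exact ⟨1, by rw [cs.wordProd_nil]; exact brle_refl cs 1, by rw [mul_one]; rfl⟩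
    · intro v' hv'
      rw [cs.wordProd_nil, brle_one_iff cs] at hv'
      subst hv'
      rw [mul_one]
      exact brle_refl cs u
  | append_singleton ω₁ c ih =>
    have hsplit := length_wordProd_append_singleton cs hred
    have hred₁ := isReduced_append_singleton cs hred
    obtain ⟨⟨v₁', hv₁'le, hx₁⟩, hmax₁⟩ := ih hred₁ u
    have hx : cs.heckeWord u (ω₁ ++ [c]) = cs.heckeStep (cs.heckeWord u ω₁) c := by
      rw [heckeWord_append, heckeWord_singleton]
    have hdescv : ℓ (π (ω₁ ++ [c]) * σ c) < ℓ (π (ω₁ ++ [c])) := by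
      rw [hsplit.2.1, mul_assoc, cs.simple_mul_simple_self, mul_one]
      exact hsplit.1
    have hv₁lev : brle cs (π ω₁) (π (ω₁ ++ [c])) := by
      rw [hsplit.2.1]
      exact brle_mul_refl_of_lt cs (cs.isReflection_simple c) hsplit.1
    constructor
    · -- membership
      rcases Nat.lt_or_ge (ℓ (cs.heckeWord u ω₁)) (ℓ (cs.heckeWord u ω₁ * σ c)) with h | h
      · refine ⟨v₁' * σ c, ?_, ?_⟩
        · exact brle_mul_simple_of_brle cs hdescv
            (brle_trans cs hv₁'le hv₁lev)
        · rw [hx, heckeStep_of_lt cs h, hx₁, mul_assoc]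
      · have hgt : ℓ (cs.heckeWord u ω₁ * σ c) < ℓ (cs.heckeWord u ω₁) := by
          have := cs.length_mul_simple_ne (cs.heckeWord u ω₁) c
          omega
        exact ⟨v₁', brle_trans cs hv₁'le hv₁lev, by rw [hx, heckeStep_of_gt cs hgt, hx₁]⟩
    · -- maximality
      intro v' hv'
      have hxle : brle cs (cs.heckeWord u ω₁) (cs.heckeWord u (ω₁ ++ [c])) := by
        rw [hx]
        exact brle_heckeStep cs _ c
      rcases Nat.lt_or_ge (ℓ v') (ℓ (v' * σ c)) with hasc | h
      · -- v' ascends: v' ≤ π ω₁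
        have hv'le₁ : brle cs v' (π ω₁) := by
          have := brle_mul_simple_right_of_brle cs hdescv hv' hasc
          rwa [hsplit.2.1, mul_assoc, cs.simple_mul_simple_self, mul_one] at this
        exact brle_trans cs (hmax₁ v' hv'le₁) hxle
      · have hdesc2 : ℓ (v' * σ c) < ℓ v' := by
          have := cs.length_mul_simple_ne v' c
          omega
        have hv''le₁ : brle cs (v' * σ c) (π ω₁) := by
          have := brle_mul_simple_mul_simple_of_brle cs hdescv hv' hdesc2
          rwa [hsplit.2.1, mul_assoc, cs.simple_mul_simple_self, mul_one] at this
        have h1 : brle cs (u * (v' * σ c)) (cs.heckeWord u (ω₁ ++ [c])) :=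
          brle_trans cs (hmax₁ _ hv''le₁) hxle
        have hdescx : ℓ (cs.heckeWord u (ω₁ ++ [c]) * σ c) < ℓ (cs.heckeWord u (ω₁ ++ [c])) := by
          rw [hx]
          exact heckeStep_descent cs _ c
        have := brle_mul_simple_of_brle cs hdescx h1
        rwa [mul_assoc, mul_assoc, cs.simple_mul_simple_self, mul_one] at this
        
/-- Well-definedness: the Hecke word product depends only on the product of the reduced word. -/
theorem heckeWord_well_defined {ω ω' : List B} (hred : cs.IsReduced ω)
    (hred' : cs.IsReduced ω') (hprod : π ω = π ω') (u : W) :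
    cs.heckeWord u ω = cs.heckeWord u ω' := by
  obtain ⟨⟨a, hale, ha⟩, hmax⟩ := heckeWord_char cs ω hred u
  obtain ⟨⟨b, hble, hb⟩, hmax'⟩ := heckeWord_char cs ω' hred' u
  apply brle_antisymm cs
  · rw [ha]
    exact hmax' a (hprod ▸ hale)
  · rw [hb]
    exact hmax b (hprod ▸ hble)

lemma heckeMul_eq_heckeWord {v : W} {l : List B} (hl : cs.IsReduced l) (hv : π l = v) (u : W) :
    cs.heckeMul u v = cs.heckeWord u l := by
  rw [CoxeterSystem.heckeMul]
  exact heckeWord_well_defined cs (cs.exists_reduced_word' v).choose_spec.1 hl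
    (by rw [hv, ← (cs.exists_reduced_word' v).choose_spec.2]) u

/-- Key recursion: the Hecke product against `v * σ a` for an ascent. -/
lemma heckeMul_mul_simple {v : W} {a : B} (h : ℓ v < ℓ (v * σ a)) (u : W) :
    cs.heckeMul u (v * σ a) = cs.heckeStep (cs.heckeMul u v) a := by
  obtain ⟨l, hl, hv⟩ := cs.exists_reduced_word' v
  have hprod : π (l ++ [a]) = v * σ a := by
    rw [cs.wordProd_append, cs.wordProd_singleton, ← hv]
  have hred : cs.IsReduced (l ++ [a]) := by
    show ℓ (π (l ++ [a])) = (l ++ [a]).length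
    rw [hprod]
    have h1 : ℓ v = l.length := by rw [hv]; exact hl
    have h2 : ℓ (v * σ a) = ℓ v + 1 := by
      rcases cs.length_mul_simple v a with hh | hh <;> omega
    simp only [List.length_append, List.length_singleton]
    omega
  rw [heckeMul_eq_heckeWord cs hred hprod u, heckeWord_append, heckeWord_singleton,
    ← heckeMul_eq_heckeWord cs hl hv.symm u]

/-! ### The final coset argument -/

lemma heckeMul_step_mem (SS : Subgroup W) (u v : W) (a : B) (ha : σ a ∈ SS) :
    (cs.heckeMul u v)⁻¹ * cs.heckeMul u (v * σ a) ∈ SS := by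
  rcases Nat.lt_or_ge (ℓ v) (ℓ (v * σ a)) with h | h
  · rw [heckeMul_mul_simple cs h u]
    rcases Nat.lt_or_ge (ℓ (cs.heckeMul u v)) (ℓ (cs.heckeMul u v * σ a)) with h2 | h2
    · rw [heckeStep_of_lt cs h2, ← mul_assoc, inv_mul_cancel, one_mul]
      exact ha
    · rw [heckeStep_of_gt cs (by have := cs.length_mul_simple_ne (cs.heckeMul u v) a; omega),
        inv_mul_cancel]
      exact one_mem _
  · -- descent: apply the ascent case to v₂ = v * σ a
    have hgt : ℓ (v * σ a) < ℓ v := by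
      have := cs.length_mul_simple_ne v a
      omega
    have hcan : (v * σ a) * σ a = v := by
      rw [mul_assoc, cs.simple_mul_simple_self, mul_one]
    have hasc : ℓ (v * σ a) < ℓ ((v * σ a) * σ a) := by rw [hcan]; exact hgt
    have hrec := heckeMul_mul_simple cs hasc u
    rw [hcan] at hrec
    rcases Nat.lt_or_ge (ℓ (cs.heckeMul u (v * σ a)))
        (ℓ (cs.heckeMul u (v * σ a) * σ a)) with h2 | h2
    · rw [hrec, heckeStep_of_lt cs h2, mul_inv_rev, cs.inv_simple, mul_assoc,
        inv_mul_cancel, mul_one]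
      exact ha
    · rw [hrec, heckeStep_of_gt cs (by
        have := cs.length_mul_simple_ne (cs.heckeMul u (v * σ a)) a; omega), inv_mul_cancel]
      exact one_mem _

theorem main (S : Set B) (u w w' : W)
    (h : w⁻¹ * w' ∈ Subgroup.closure (cs.simple '' S)) :
    (cs.heckeMul u w)⁻¹ * cs.heckeMul u w' ∈ Subgroup.closure (cs.simple '' S) := by
  set P := Subgroup.closure (cs.simple '' S) with hP
  have key : ∀ p : W, p ∈ P → ∀ v : W, (cs.heckeMul u v)⁻¹ * cs.heckeMul u (v * p) ∈ P := by
    intro p hp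
    induction hp using Subgroup.closure_induction with
    | mem x hx =>
      intro v
      obtain ⟨a, haS, rfl⟩ := hx
      exact heckeMul_step_mem cs P u v a (Subgroup.subset_closure ⟨a, haS, rfl⟩)
    | one =>
      intro v
      rw [mul_one, inv_mul_cancel]
      exact one_mem _
    | mul x y hx hy ihx ihy =>
      intro v
      have h1 := ihx v
      have h2 := ihy (v * x)
      rw [mul_assoc] at h2
      have := mul_mem h1 h2
      rwa [mul_assoc, ← mul_assoc (cs.heckeMul u (v * x)), mul_inv_cancel, one_mul] at this

    | inv x hx ihx =>
      intro v
      have h1 := ihx (v * x⁻¹)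
      rw [mul_assoc, inv_mul_cancel, mul_one] at h1
      have := inv_mem h1
      rwa [mul_inv_rev, inv_inv] at this
  have := key (w⁻¹ * w') h w
  rwa [← mul_assoc, mul_inv_cancel, one_mul] at this

end HeckeAux
end HeckeAux

/-- The Hecke product descends to a well-defined action on `W/W_P`. -/
theorem heckeMul_coset_wellDefined
    {B W : Type*} [Group W] {M : CoxeterMatrix B} (cs : CoxeterSystem M W)
    (S : Set B) (u w w' : W)
    (h : w⁻¹ * w' ∈ Subgroup.closure (cs.simple '' S)) :
    (cs.heckeMul u w)⁻¹ * cs.heckeMul u w' ∈ Subgroup.closure (cs.simple '' S) := by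
  exact HeckeAux.main cs S u w w' h
end

section
/- Let α be a positive root and β a simple root in a crystallographic root system. Then s_α · s_β = s_β · s_α (Hecke product) if and only if (α, β) ≥ 0. -/
open scoped RealInnerProductSpace

noncomputable section

variable {V : Type*} [NormedAddCommGroup V] [InnerProductSpace ℝ V]

/-- The reflection in a vector `α`: `γ ↦ γ − (2⟪α,γ⟫/⟪α,α⟫)·α` (identity if `α = 0`). -/
def reflE (α : V) : V ≃ₗ[ℝ] V :=
  if h : ⟪α, α⟫ = (0 : ℝ) then LinearEquiv.refl ℝ V
  else
    Module.reflection (f := (2 / ⟪α, α⟫) • ((innerSL ℝ α).toLinearMap)) (x := α)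
      (by
        simp only [LinearMap.smul_apply, ContinuousLinearMap.coe_coe, innerSL_apply_apply,
          smul_eq_mul]
        field_simp)

/-- Data of a (crystallographic) root system, realized in a real inner product space,
together with a choice of simple roots. -/
structure RootSystemData (V : Type*) [NormedAddCommGroup V] [InnerProductSpace ℝ V] where
  /-- the set of roots -/
  R : Finset V
  /-- the simple roots -/
  Δ : Finset V
  ne_zero : ∀ α ∈ R, α ≠ 0
  simple_mem : ∀ β ∈ Δ, β ∈ R
  indep : LinearIndependent ℝ (fun β : Δ => (β : V))
  crystal : ∀ α ∈ R, ∀ γ ∈ R, ∃ n : ℤ, 2 * ⟪γ, α⟫ / ⟪α, α⟫ = (n : ℝ)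
  refl_mem : ∀ α ∈ R, ∀ γ ∈ R, reflE α γ ∈ R
  pos_or_neg : ∀ α ∈ R,
    (∃ c : V → ℝ, (∀ v, 0 ≤ c v) ∧ α = ∑ β ∈ Δ, c β • β) ∨
    (∃ c : V → ℝ, (∀ v, 0 ≤ c v) ∧ -α = ∑ β ∈ Δ, c β • β)

/-- the coroot `α∨ = 2α/(α,α)` -/
def coroot (α : V) : V := (2 / ⟪α, α⟫) • α

namespace RootSystemData

variable (rs : RootSystemData V)

/-- positive roots -/
def IsPos (α : V) : Prop :=
  α ∈ rs.R ∧ ∃ c : V → ℝ, (∀ v, 0 ≤ c v) ∧ α = ∑ β ∈ rs.Δ, c β • β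

/-- the partial order on the root lattice: `y − x` is a nonnegative combination of
the simple roots -/
def rootLE (x y : V) : Prop :=
  ∃ c : V → ℝ, (∀ v, 0 ≤ c v) ∧ y - x = ∑ β ∈ rs.Δ, c β • β

/-- the partial order on degrees: `y − x` is a nonnegative combination of the
simple coroots -/
def corootLE (x y : V) : Prop :=
  ∃ c : V → ℝ, (∀ v, 0 ≤ c v) ∧ y - x = ∑ β ∈ rs.Δ, c β • coroot β

/-- an effective degree -/
def Effective (d : V) : Prop := rs.corootLE 0 d

/-- `α` is a maximal root of the degree `d`, i.e. a maximal element of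
`{γ ∈ R⁺ : γ∨ ≤ d}` -/
def IsMaxRoot (d α : V) : Prop :=
  rs.IsPos α ∧ rs.corootLE (coroot α) d ∧
    ∀ γ, rs.IsPos γ → rs.corootLE (coroot γ) d → rs.rootLE α γ → γ = α

/-- a cosmall root: a maximal root of its own coroot degree -/
def IsCosmall (α : V) : Prop := rs.IsMaxRoot (coroot α) α

/-- the length of a Weyl group element: the number of positive roots sent to
negative roots -/
def len (w : V ≃ₗ[ℝ] V) : ℕ := Set.ncard {γ | rs.IsPos γ ∧ ¬ rs.IsPos (w γ)}

/-- the Bruhat order on the Weyl group -/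
def bruhatLE (x y : V ≃ₗ[ℝ] V) : Prop :=
  Relation.ReflTransGen
    (fun a b => ∃ α ∈ rs.R, b = a * reflE α ∧ rs.len a < rs.len b) x y

/-- the support of a root: the simple roots below it -/
def supp (α : V) : Set V := {β | β ∈ rs.Δ ∧ rs.rootLE β α}

/-- two roots are separated if every simple root in the support of one is
perpendicular to every simple root in the support of the other -/
def Separated (α β : V) : Prop :=
  ∀ x ∈ rs.supp α, ∀ y ∈ rs.supp β, ⟪x, y⟫ = (0 : ℝ)

end RootSystemData

/-- greedy decompositions of an effective degree -/
inductive RootSystemData.Greedy (rs : RootSystemData V) : V → List V → Prop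
  | nil : rs.Greedy 0 []
  | cons {d α l} : rs.IsMaxRoot d α → rs.Greedy (d - coroot α) l →
      rs.Greedy d (α :: l)

/-- The Hecke product on the Weyl group, given axiomatically: it is associative,
unital, and is given on simple reflections by the usual Demazure recipe. -/
structure HeckeData (rs : RootSystemData V) where
  hmul : (V ≃ₗ[ℝ] V) → (V ≃ₗ[ℝ] V) → (V ≃ₗ[ℝ] V)
  hmul_assoc : ∀ u v w, hmul (hmul u v) w = hmul u (hmul v w)
  one_hmul : ∀ u, hmul 1 u = u
  hmul_one : ∀ u, hmul u 1 = u
  hmul_simple : ∀ u (β : V), β ∈ rs.Δ →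
    hmul u (reflE β) =
      if rs.len u < rs.len (u * reflE β) then u * reflE β else u

/-- the Hecke product `s_{α₁} · s_{α₂} · … · s_{α_k}` of the reflections in a list
of roots -/
def HeckeData.zOf {rs : RootSystemData V} (H : HeckeData rs) (l : List V) :
    (V ≃ₗ[ℝ] V) :=
  l.foldl (fun w α => H.hmul w (reflE α)) 1

end

/-!
Both Hecke products are evaluated by the Demazure rules `w · s_γ = w s_γ` if `w γ > 0` and
`w · s_γ = w` otherwise, and `s_β · w = s_β w` if `w⁻¹ β > 0` and `s_β · w = w` otherwise.
The first is the axiom `hmul_simple`, once `ℓ(w s_γ) > ℓ(w) ↔ w γ > 0` is known. The second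
follows from associativity, by induction along a word `w = s_{γ₁} · ⋯ · s_{γₖ}`; such a word
exists for `w = s_α` by induction on the height of `α`.

As `s_α⁻¹ β = s_α β = β - ⟨β, α^∨⟩ α`, the root `s_α β` is positive exactly when
`(α, β) ≤ 0`. If `(α, β) > 0` both products are therefore `s_α`; otherwise they are `s_α s_β`
and `s_β s_α`, and two reflections commute only when their roots are orthogonal or
proportional, the latter being excluded by `(α, β) < 0`.
-/

lemma LinearEquiv.symm_apply_eq_inv_smul_iff {K M : Type*} [Field K] [AddCommGroup M]
    [Module K M] (w : M ≃ₗ[K] M) {x y : M} {t : K} (ht : t ≠ 0) :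
    w.symm y = t⁻¹ • x ↔ w x = t • y := by
  rw [LinearEquiv.symm_apply_eq, map_smul, eq_inv_smul_iff₀ ht, eq_comm]

lemma LinearEquiv.exists_symm_apply_eq_smul_iff {K M : Type*} [Field K] [AddCommGroup M]
    [Module K M] (w : M ≃ₗ[K] M) {x y : M} (hx : x ≠ 0) (hy : y ≠ 0) :
    (∃ t : K, w.symm y = t • x) ↔ ∃ t : K, w x = t • y := by
  constructor
  · rintro ⟨t, ht⟩
    have ht0 : t ≠ 0 := by rintro rfl; simp_all
    exact ⟨t⁻¹, (w.symm_apply_eq_inv_smul_iff (inv_ne_zero ht0)).mp (by rwa [inv_inv])⟩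
  · rintro ⟨t, ht⟩
    have ht0 : t ≠ 0 := by rintro rfl; simp_all
    exact ⟨t⁻¹, (w.symm_apply_eq_inv_smul_iff ht0).mpr ht⟩

section Reflection

variable {V : Type*} [NormedAddCommGroup V] [InnerProductSpace ℝ V]

lemma reflE_apply (α x : V) : reflE α x = x - (2 / ⟪α, α⟫ * ⟪α, x⟫) • α := by
  by_cases h : ⟪α, α⟫ = (0 : ℝ)
  · simp [reflE, inner_self_eq_zero.mp h]
  · rw [reflE, dif_neg h, Module.reflection_apply]
    simp

lemma reflE_involutive (α : V) : Function.Involutive (reflE α) := by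
  unfold reflE
  split
  · exact fun _ => rfl
  · exact Module.involutive_reflection _

lemma reflE_mul_self (α : V) : reflE α * reflE α = 1 :=
  LinearEquiv.ext (reflE_involutive α)

lemma reflE_symm (α : V) : (reflE α).symm = reflE α :=
  inv_eq_of_mul_eq_one_right (reflE_mul_self α)

lemma reflE_self {α : V} (hα : α ≠ 0) : reflE α α = -α := by
  rw [reflE_apply, div_mul_cancel₀ _ (inner_self_ne_zero.mpr hα)]
  module

lemma inner_reflE_reflE (α x y : V) : ⟪reflE α x, reflE α y⟫ = ⟪x, y⟫ := by
  by_cases h : ⟪α, α⟫ = (0 : ℝ)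
  · simp [reflE, inner_self_eq_zero.mp h]
  · simp only [reflE_apply, inner_sub_left, inner_sub_right, real_inner_smul_left,
      real_inner_smul_right, real_inner_comm x α]
    field_simp
    ring

lemma reflE_smul {t : ℝ} (ht : t ≠ 0) (α : V) : reflE (t • α) = reflE α := by
  ext x
  by_cases h : α = 0
  · simp [h]
  · have hαα : ⟪α, α⟫ ≠ (0 : ℝ) := inner_self_ne_zero.mpr h
    simp only [reflE_apply, real_inner_smul_left, real_inner_smul_right, smul_smul]
    congr 2
    field_simp

lemma reflE_map {u : V ≃ₗ[ℝ] V} (hu : ∀ x y, ⟪u x, u y⟫ = ⟪x, y⟫) (α : V) :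
    reflE (u α) * u = u * reflE α := by
  ext x
  simp only [LinearEquiv.mul_apply, reflE_apply, map_sub, map_smul, hu]

lemma exists_eq_smul_of_reflE_apply_eq_neg {β x : V} (h : reflE β x = -x) :
    ∃ c : ℝ, x = c • β := by
  refine ⟨(2 / ⟪β, β⟫ * ⟪β, x⟫) / 2, ?_⟩
  rw [reflE_apply] at h
  linear_combination (norm := module) (1 / 2 : ℝ) • h

lemma exists_eq_smul_of_reflE_apply_eq_smul {α β : V} (hαβ : ⟪α, β⟫ ≠ 0) {c : ℝ}
    (h : reflE α β = c • β) : ∃ t : ℝ, α = t • β := by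
  have hα : α ≠ 0 := by rintro rfl; simp at hαβ
  have hk : 2 / ⟪α, α⟫ * ⟪α, β⟫ ≠ 0 :=
    mul_ne_zero (div_ne_zero two_ne_zero (inner_self_ne_zero.mpr hα)) hαβ
  refine ⟨(2 / ⟪α, α⟫ * ⟪α, β⟫)⁻¹ * (1 - c), ?_⟩
  rw [reflE_apply] at h
  rw [mul_smul, sub_smul, one_smul, ← h, sub_sub_cancel, inv_smul_smul₀ hk]

lemma reflE_mul_comm_iff {α β : V} (hβ : β ≠ 0) :
    reflE α * reflE β = reflE β * reflE α ↔ ⟪α, β⟫ = 0 ∨ ∃ t : ℝ, α = t • β := by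
  constructor
  · intro h
    have hneg : reflE β (reflE α β) = -reflE α β := by
      rw [← LinearEquiv.mul_apply, ← h, LinearEquiv.mul_apply, reflE_self hβ, map_neg]
    obtain ⟨c, hc⟩ := exists_eq_smul_of_reflE_apply_eq_neg hneg
    exact or_iff_not_imp_left.mpr fun hαβ => exists_eq_smul_of_reflE_apply_eq_smul hαβ hc
  · rintro (h | ⟨t, rfl⟩)
    · have h' : ⟪β, α⟫ = (0 : ℝ) := by rwa [real_inner_comm]
      ext x
      simp only [LinearEquiv.mul_apply, reflE_apply, inner_sub_right, real_inner_smul_right, h,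
        h', mul_zero, sub_zero]
      module
    · by_cases ht : t = 0
      · ext x
        simp [ht, reflE_apply]
      · rw [reflE_smul ht]

end Reflection

namespace RootSystemData

variable {V : Type*} [NormedAddCommGroup V] [InnerProductSpace ℝ V] (rs : RootSystemData V)

lemma linearIndepOn_simple : LinearIndepOn ℝ id (rs.Δ : Set V) := rs.indep

open scoped Classical in
/-- The `δ`-coordinate in a basis of `V` extending the simple roots (zero unless `δ ∈ Δ`). -/
noncomputable def coord (δ : V) : V →ₗ[ℝ] ℝ :=
  if hδ : δ ∈ rs.Δ then
    (Module.Basis.extend rs.linearIndepOn_simple).coord ⟨δ, LinearIndepOn.subset_extend _ _ hδ⟩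
  else 0

open scoped Classical in
lemma coord_simple {δ β : V} (hδ : δ ∈ rs.Δ) (hβ : β ∈ rs.Δ) :
    rs.coord δ β = if δ = β then 1 else 0 := by
  have h := (Module.Basis.extend rs.linearIndepOn_simple).repr_self
    ⟨β, LinearIndepOn.subset_extend _ _ hβ⟩
  rw [Module.Basis.coe_extend] at h
  rw [coord, dif_pos hδ, Module.Basis.coord_apply, h, Finsupp.single_apply]
  exact if_congr (by rw [Subtype.mk.injEq, eq_comm]) rfl rfl

lemma coord_self {δ : V} (hδ : δ ∈ rs.Δ) : rs.coord δ δ = 1 := by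
  simp [rs.coord_simple hδ hδ]

lemma coord_simple_of_ne {δ β : V} (hδ : δ ∈ rs.Δ) (hβ : β ∈ rs.Δ) (h : δ ≠ β) :
    rs.coord δ β = 0 := by
  simp [rs.coord_simple hδ hβ, h]

lemma coord_sum (c : V → ℝ) {δ : V} (hδ : δ ∈ rs.Δ) :
    rs.coord δ (∑ β ∈ rs.Δ, c β • β) = c δ := by
  rw [map_sum, Finset.sum_eq_single_of_mem δ hδ fun β hβ hne => ?_]
  · simp [rs.coord_self hδ]
  · simp [rs.coord_simple_of_ne hδ hβ hne.symm]

noncomputable def height : V →ₗ[ℝ] ℝ := ∑ δ ∈ rs.Δ, rs.coord δ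

lemma height_simple {γ : V} (hγ : γ ∈ rs.Δ) : rs.height γ = 1 := by
  rw [height, LinearMap.sum_apply,
    Finset.sum_eq_single_of_mem γ hγ fun δ hδ hδγ => rs.coord_simple_of_ne hδ hγ hδγ,
    rs.coord_self hγ]

lemma wellFoundedOn_height : (rs.R : Set V).WellFoundedOn (fun x y => rs.height x < rs.height y) :=
  Set.wellFoundedOn_image.mp (rs.R.finite_toSet.image _).wellFoundedOn

variable {rs}

lemma IsPos.coord_nonneg {α δ : V} (hα : rs.IsPos α) (hδ : δ ∈ rs.Δ) : 0 ≤ rs.coord δ α := by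
  obtain ⟨-, c, hc, rfl⟩ := hα
  rw [rs.coord_sum c hδ]
  exact hc δ

lemma IsPos.eq_sum_coord {α : V} (hα : rs.IsPos α) : α = ∑ δ ∈ rs.Δ, rs.coord δ α • δ := by
  obtain ⟨-, c, -, rfl⟩ := hα
  exact Finset.sum_congr rfl fun δ hδ => by rw [rs.coord_sum c hδ]

lemma IsPos.exists_coord_pos {α : V} (hα : rs.IsPos α) : ∃ δ ∈ rs.Δ, 0 < rs.coord δ α := by
  by_contra! h
  apply rs.ne_zero α hα.1
  rw [hα.eq_sum_coord]
  refine Finset.sum_eq_zero fun δ hδ => ?_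
  rw [le_antisymm (h δ hδ) (hα.coord_nonneg hδ), zero_smul]

lemma not_isPos_of_coord_neg {α δ : V} (hδ : δ ∈ rs.Δ) (h : rs.coord δ α < 0) : ¬ rs.IsPos α :=
  fun hα => (hα.coord_nonneg hδ).not_gt h

lemma IsPos.not_isPos_neg {α : V} (hα : rs.IsPos α) : ¬ rs.IsPos (-α) := by
  obtain ⟨δ, hδ, h⟩ := hα.exists_coord_pos
  exact not_isPos_of_coord_neg hδ (by rw [map_neg]; linarith)

lemma isPos_of_coord_pos {α δ : V} (hα : α ∈ rs.R) (hδ : δ ∈ rs.Δ) (h : 0 < rs.coord δ α) :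
    rs.IsPos α := by
  refine ⟨hα, (rs.pos_or_neg α hα).resolve_right ?_⟩
  rintro ⟨c, hc, hneg⟩
  have := rs.coord_sum c hδ
  rw [← hneg, map_neg] at this
  linarith [hc δ]

lemma neg_mem_roots {α : V} (hα : α ∈ rs.R) : -α ∈ rs.R := by
  simpa [reflE_self (rs.ne_zero α hα)] using rs.refl_mem α hα α hα

lemma isPos_neg_iff {α : V} (hα : α ∈ rs.R) : rs.IsPos (-α) ↔ ¬ rs.IsPos α := by
  refine ⟨fun h hα' => hα'.not_isPos_neg h, fun h => ⟨neg_mem_roots hα, ?_⟩⟩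
  exact (rs.pos_or_neg α hα).resolve_left fun h' => h ⟨hα, h'⟩

lemma isPos_simple {β : V} (hβ : β ∈ rs.Δ) : rs.IsPos β :=
  isPos_of_coord_pos (rs.simple_mem β hβ) hβ (by rw [rs.coord_self hβ]; exact one_pos)

lemma IsPos.smul {α : V} (hα : rs.IsPos α) {t : ℝ} (ht : 0 < t) (hmem : t • α ∈ rs.R) :
    rs.IsPos (t • α) := by
  obtain ⟨δ, hδ, h⟩ := hα.exists_coord_pos
  exact isPos_of_coord_pos hmem hδ (by rw [map_smul, smul_eq_mul]; positivity)

lemma IsPos.pos_of_eq_smul {α γ : V} (hα : rs.IsPos α) (hγ : rs.IsPos γ) {t : ℝ}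
    (h : α = t • γ) : 0 < t := by
  obtain ⟨δ, hδ, hpos⟩ := hγ.exists_coord_pos
  have hα' := hα.coord_nonneg hδ
  rw [h, map_smul, smul_eq_mul] at hα'
  refine lt_of_le_of_ne (nonneg_of_mul_nonneg_left hα' hpos) fun ht => ?_
  exact rs.ne_zero α hα.1 (by rw [h, ← ht, zero_smul])

lemma IsPos.exists_coord_pos_ne {α γ : V} (hα : rs.IsPos α) (hγ : γ ∈ rs.Δ)
    (hne : ∀ t : ℝ, α ≠ t • γ) : ∃ δ ∈ rs.Δ, δ ≠ γ ∧ 0 < rs.coord δ α := by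
  by_contra! h
  apply hne (rs.coord γ α)
  conv_lhs => rw [hα.eq_sum_coord]
  refine Finset.sum_eq_single_of_mem γ hγ fun δ hδ hδγ => ?_
  rw [le_antisymm (h δ hδ hδγ) (hα.coord_nonneg hδ), zero_smul]

lemma isPos_reflE_simple_iff {α γ : V} (hα : rs.IsPos α) (hγ : γ ∈ rs.Δ) :
    rs.IsPos (reflE γ α) ↔ ∀ t : ℝ, α ≠ t • γ := by
  constructor
  · rintro h t rfl
    rw [map_smul, reflE_self (rs.ne_zero γ (rs.simple_mem γ hγ)), smul_neg] at h
    exact hα.not_isPos_neg h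
  · intro hne
    obtain ⟨δ, hδ, hδγ, hpos⟩ := hα.exists_coord_pos_ne hγ hne
    refine isPos_of_coord_pos (rs.refl_mem γ (rs.simple_mem γ hγ) α hα.1) hδ ?_
    rwa [reflE_apply, map_sub, map_smul, rs.coord_simple_of_ne hδ hγ hδγ, smul_zero, sub_zero]

lemma IsPos.exists_inner_pos {α : V} (hα : rs.IsPos α) : ∃ γ ∈ rs.Δ, 0 < ⟪α, γ⟫ := by
  by_contra! h
  have : ⟪α, α⟫ ≤ (0 : ℝ) := by
    nth_rw 2 [hα.eq_sum_coord]
    rw [inner_sum]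
    exact Finset.sum_nonpos fun δ hδ => by
      rw [real_inner_smul_right]
      exact mul_nonpos_of_nonneg_of_nonpos (hα.coord_nonneg hδ) (h δ hδ)
  exact (real_inner_self_pos.mpr (rs.ne_zero α hα.1)).not_ge this

lemma isPos_neg_reflE_apply_simple {α β : V} (hα : rs.IsPos α) (hβ : β ∈ rs.Δ)
    (hαβ : 0 < ⟪α, β⟫) (hne : ∀ t : ℝ, α ≠ t • β) : rs.IsPos (-reflE α β) := by
  obtain ⟨δ, hδ, hδβ, hpos⟩ := hα.exists_coord_pos_ne hβ hne
  refine isPos_of_coord_pos (neg_mem_roots (rs.refl_mem α hα.1 β (rs.simple_mem β hβ))) hδ ?_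
  rw [reflE_apply, map_neg, map_sub, map_smul, rs.coord_simple_of_ne hδ hβ hδβ, smul_eq_mul]
  have : 0 < ⟪α, α⟫ := real_inner_self_pos.mpr (rs.ne_zero α hα.1)
  have : 0 < 2 / ⟪α, α⟫ * ⟪α, β⟫ * rs.coord δ α := by positivity
  linarith

lemma isPos_reflE_apply_simple_iff {α β : V} (hα : rs.IsPos α) (hβ : β ∈ rs.Δ) :
    rs.IsPos (reflE α β) ↔ ⟪α, β⟫ ≤ 0 := by
  constructor
  · intro h
    by_contra! hαβ
    by_cases hprop : ∃ t : ℝ, α = t • β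
    · obtain ⟨t, rfl⟩ := hprop
      have ht := hα.pos_of_eq_smul (isPos_simple hβ) rfl
      rw [reflE_smul ht.ne', reflE_self (rs.ne_zero β (rs.simple_mem β hβ))] at h
      exact (isPos_simple hβ).not_isPos_neg h
    · exact h.not_isPos_neg (isPos_neg_reflE_apply_simple hα hβ hαβ (not_exists.mp hprop))
  · intro hαβ
    refine isPos_of_coord_pos (rs.refl_mem α hα.1 β (rs.simple_mem β hβ)) hβ ?_
    rw [reflE_apply, map_sub, map_smul, rs.coord_self hβ, smul_eq_mul]
    have : 0 < ⟪α, α⟫ := real_inner_self_pos.mpr (rs.ne_zero α hα.1)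
    have : 2 / ⟪α, α⟫ * ⟪α, β⟫ * rs.coord β α ≤ 0 :=
      mul_nonpos_of_nonpos_of_nonneg (mul_nonpos_of_nonneg_of_nonpos (by positivity) hαβ)
        (hα.coord_nonneg hβ)
    linarith

variable (rs) in
structure IsRootIsometry (w : V ≃ₗ[ℝ] V) : Prop where
  apply_mem_iff : ∀ x, w x ∈ rs.R ↔ x ∈ rs.R
  inner_map_map : ∀ x y, ⟪w x, w y⟫ = ⟪x, y⟫

namespace IsRootIsometry

lemma one : rs.IsRootIsometry 1 := ⟨fun _ => Iff.rfl, fun _ _ => rfl⟩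

lemma reflE {α : V} (hα : α ∈ rs.R) : rs.IsRootIsometry (reflE α) := by
  refine ⟨fun x => ⟨fun h => ?_, rs.refl_mem α hα x⟩, inner_reflE_reflE α⟩
  simpa [reflE_involutive α x] using rs.refl_mem α hα _ h

lemma mul {u w : V ≃ₗ[ℝ] V} (hu : rs.IsRootIsometry u) (hw : rs.IsRootIsometry w) :
    rs.IsRootIsometry (u * w) :=
  ⟨fun x => (hu.apply_mem_iff (w x)).trans (hw.apply_mem_iff x),
    fun x y => (hu.inner_map_map (w x) (w y)).trans (hw.inner_map_map x y)⟩

lemma symm_apply_mem {w : V ≃ₗ[ℝ] V} (hw : rs.IsRootIsometry w) {x : V} (hx : x ∈ rs.R) :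
    w.symm x ∈ rs.R :=
  (hw.apply_mem_iff _).mp (by rwa [w.apply_symm_apply])

end IsRootIsometry

/-- Right multiplication by `s_γ` maps the inversion set of `w` into that of `w s_γ`,
and `γ` is a new inversion. -/
lemma len_lt_len_mul_reflE {w : V ≃ₗ[ℝ] V} (hw : rs.IsRootIsometry w) {γ : V} (hγ : γ ∈ rs.Δ)
    (hwγ : rs.IsPos (w γ)) : rs.len w < rs.len (w * reflE γ) := by
  have hγ0 := rs.ne_zero γ (rs.simple_mem γ hγ)
  have hsub : reflE γ '' {δ | rs.IsPos δ ∧ ¬ rs.IsPos (w δ)} ⊆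
      {δ | rs.IsPos δ ∧ ¬ rs.IsPos ((w * reflE γ) δ)} := by
    rintro _ ⟨δ, ⟨hδ, hwδ⟩, rfl⟩
    refine ⟨(isPos_reflE_simple_iff hδ hγ).mpr fun t ht => hwδ ?_, ?_⟩
    · rw [ht, map_smul] at hwδ ⊢
      refine hwγ.smul (hδ.pos_of_eq_smul (isPos_simple hγ) ht) ?_
      rw [← map_smul, ← ht]
      exact (hw.apply_mem_iff δ).mpr hδ.1
    · rwa [LinearEquiv.mul_apply, reflE_involutive]
  have hγnew : γ ∉ reflE γ '' {δ | rs.IsPos δ ∧ ¬ rs.IsPos (w δ)} := by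
    rintro ⟨δ, ⟨hδ, -⟩, hδγ⟩
    rw [← reflE_involutive γ δ, hδγ, reflE_self hγ0] at hδ
    exact (isPos_simple hγ).not_isPos_neg hδ
  have hγinv : γ ∈ {δ | rs.IsPos δ ∧ ¬ rs.IsPos ((w * reflE γ) δ)} := by
    refine ⟨isPos_simple hγ, ?_⟩
    rw [LinearEquiv.mul_apply, reflE_self hγ0, map_neg]
    exact hwγ.not_isPos_neg
  rw [len, len, ← Set.ncard_image_of_injective _ (reflE γ).injective]
  exact Set.ncard_lt_ncard ((Set.ssubset_iff_of_subset hsub).mpr ⟨γ, hγinv, hγnew⟩)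
    (rs.R.finite_toSet.subset fun _ h => h.1.1)

lemma len_lt_len_mul_reflE_iff {w : V ≃ₗ[ℝ] V} (hw : rs.IsRootIsometry w) {γ : V}
    (hγ : γ ∈ rs.Δ) : rs.len w < rs.len (w * reflE γ) ↔ rs.IsPos (w γ) := by
  refine ⟨fun hlt => ?_, len_lt_len_mul_reflE hw hγ⟩
  by_contra hwγ
  have hγR := rs.simple_mem γ hγ
  have hpos : rs.IsPos ((w * reflE γ) γ) := by
    rw [LinearEquiv.mul_apply, reflE_self (rs.ne_zero γ hγR), map_neg,
      isPos_neg_iff ((hw.apply_mem_iff γ).mpr hγR)]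
    exact hwγ
  have := len_lt_len_mul_reflE (hw.mul (.reflE hγR)) hγ hpos
  rw [mul_assoc, reflE_mul_self, mul_one] at this
  exact lt_asymm hlt this

end RootSystemData

namespace HeckeData

open RootSystemData

variable {V : Type*} [NormedAddCommGroup V] [InnerProductSpace ℝ V] {rs : RootSystemData V}
  (H : HeckeData rs)

open scoped Classical in
lemma hmul_reflE {w : V ≃ₗ[ℝ] V} (hw : rs.IsRootIsometry w) {γ : V} (hγ : γ ∈ rs.Δ) :
    H.hmul w (reflE γ) = if rs.IsPos (w γ) then w * reflE γ else w := by
  rw [H.hmul_simple w γ hγ]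
  exact if_congr (len_lt_len_mul_reflE_iff hw hγ) rfl rfl

lemma zOf_singleton (γ : V) : H.zOf [γ] = reflE γ := H.one_hmul _

lemma foldl_hmul_reflE (l : List V) (u : V ≃ₗ[ℝ] V) :
    l.foldl (fun w α => H.hmul w (reflE α)) u = H.hmul u (H.zOf l) := by
  induction l generalizing u with
  | nil => exact (H.hmul_one u).symm
  | cons a l ih =>
    rw [zOf, List.foldl_cons, List.foldl_cons, H.one_hmul, ih, ih, H.hmul_assoc]

lemma zOf_cons (a : V) (l : List V) : H.zOf (a :: l) = H.hmul (reflE a) (H.zOf l) := by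
  rw [zOf, List.foldl_cons, H.one_hmul, foldl_hmul_reflE]

lemma zOf_append_singleton (l : List V) (γ : V) :
    H.zOf (l ++ [γ]) = H.hmul (H.zOf l) (reflE γ) := by
  rw [zOf, List.foldl_append]
  rfl

lemma isRootIsometry_zOf {l : List V} (hl : ∀ γ ∈ l, γ ∈ rs.Δ) : rs.IsRootIsometry (H.zOf l) := by
  induction l using List.reverseRecOn with
  | nil => exact .one
  | append_singleton l γ ih =>
    have hγ : γ ∈ rs.Δ := hl γ (by simp)
    have hw := ih fun δ hδ => hl δ (by simp [hδ])
    rw [zOf_append_singleton, H.hmul_reflE hw hγ]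
    split
    · exact hw.mul (.reflE (rs.simple_mem γ hγ))
    · exact hw

open scoped Classical in
lemma reflE_hmul_mul_reflE {w : V ≃ₗ[ℝ] V} (hw : rs.IsRootIsometry w) {β γ : V}
    (hβ : β ∈ rs.Δ) (hγ : γ ∈ rs.Δ) (hwγ : rs.IsPos (w γ))
    (ih : H.hmul (reflE β) w = if rs.IsPos (w.symm β) then reflE β * w else w) :
    H.hmul (reflE β) (w * reflE γ) =
      if rs.IsPos ((w * reflE γ).symm β) then reflE β * (w * reflE γ) else w * reflE γ := by
  have hβR := rs.simple_mem β hβ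
  have hsβw := (IsRootIsometry.reflE hβR).mul hw
  have hsymm : (w * reflE γ).symm β = reflE γ (w.symm β) := by
    change (reflE γ).symm (w.symm β) = _
    rw [reflE_symm]
  have hassoc : H.hmul (reflE β) (w * reflE γ) = H.hmul (H.hmul (reflE β) w) (reflE γ) := by
    rw [H.hmul_assoc, H.hmul_reflE hw hγ, if_pos hwγ]
  rw [hassoc, ih, hsymm]
  -- As `w γ > 0`: `s_β (w γ) < 0` iff `w γ ∈ ℝ β` iff `w⁻¹ β ∈ ℝ γ`, and then `s_β w = w s_γ`.
  by_cases hprop : ∃ t : ℝ, w γ = t • β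
  · obtain ⟨t, ht⟩ := hprop
    have htpos : 0 < t := hwγ.pos_of_eq_smul (isPos_simple hβ) ht
    have hwβ : w.symm β = t⁻¹ • γ := (w.symm_apply_eq_inv_smul_iff htpos.ne').mpr ht
    have hwβpos : rs.IsPos (w.symm β) := by
      rw [hwβ]
      exact (isPos_simple hγ).smul (inv_pos.mpr htpos) (hwβ ▸ hw.symm_apply_mem hβR)
    have hcomm : reflE β * w = w * reflE γ := by
      rw [← reflE_smul htpos.ne' β, ← ht, reflE_map hw.inner_map_map]
    rw [if_pos hwβpos, H.hmul_reflE hsβw hγ, if_neg, if_neg, hcomm]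
    · exact fun h => (isPos_reflE_simple_iff hwβpos hγ).mp h t⁻¹ hwβ
    · exact fun h => (isPos_reflE_simple_iff hwγ hβ).mp h t ht
  have hprop' : ¬ ∃ t : ℝ, w.symm β = t • γ :=
    (w.exists_symm_apply_eq_smul_iff (rs.ne_zero γ (rs.simple_mem γ hγ))
      (rs.ne_zero β hβR)).not.mpr hprop
  simp only [not_exists] at hprop hprop'
  by_cases hwβ : rs.IsPos (w.symm β)
  · have h₁ : rs.IsPos ((reflE β * w) γ) := (isPos_reflE_simple_iff hwγ hβ).mpr hprop
    have h₂ := (isPos_reflE_simple_iff hwβ hγ).mpr hprop'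
    rw [if_pos hwβ, H.hmul_reflE hsβw hγ, if_pos h₁, if_pos h₂, mul_assoc]
  · have hneg : rs.IsPos (-w.symm β) := (isPos_neg_iff (hw.symm_apply_mem hβR)).mpr hwβ
    have hsγneg := (isPos_reflE_simple_iff hneg hγ).mpr fun t ht => hprop' (-t) (by
      rw [neg_smul, ← ht, neg_neg])
    rw [map_neg] at hsγneg
    rw [if_neg hwβ, H.hmul_reflE hw hγ, if_pos hwγ, if_neg fun h => h.not_isPos_neg hsγneg]

open scoped Classical in
lemma reflE_hmul_zOf {β : V} (hβ : β ∈ rs.Δ) {l : List V} (hl : ∀ γ ∈ l, γ ∈ rs.Δ) :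
    H.hmul (reflE β) (H.zOf l) =
      if rs.IsPos ((H.zOf l).symm β) then reflE β * H.zOf l else H.zOf l := by
  induction l using List.reverseRecOn with
  | nil =>
    have h1 : (H.zOf []).symm β = β := rfl
    rw [h1, if_pos (isPos_simple hβ)]
    exact (H.hmul_one _).trans (mul_one _).symm
  | append_singleton l γ ih =>
    have hl' : ∀ δ ∈ l, δ ∈ rs.Δ := fun δ hδ => hl δ (by simp [hδ])
    have hγ : γ ∈ rs.Δ := hl γ (by simp)
    have hw := H.isRootIsometry_zOf hl'
    rw [zOf_append_singleton, H.hmul_reflE hw hγ]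
    by_cases hwγ : rs.IsPos (H.zOf l γ)
    · rw [if_pos hwγ]
      exact H.reflE_hmul_mul_reflE hw hβ hγ hwγ (ih hl')
    · rw [if_neg hwγ]
      exact ih hl'

lemma zOf_cons_append_singleton {γ : V} (hγ : γ ∈ rs.Δ) {l : List V} (hl : ∀ δ ∈ l, δ ∈ rs.Δ)
    (h₁ : rs.IsPos ((H.zOf l).symm γ)) (h₂ : rs.IsPos (reflE γ (H.zOf l γ))) :
    H.zOf (γ :: l ++ [γ]) = reflE γ * H.zOf l * reflE γ := by
  have hw := H.isRootIsometry_zOf hl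
  rw [List.cons_append, ← List.cons_append, zOf_append_singleton, zOf_cons,
    H.reflE_hmul_zOf hγ hl, if_pos h₁,
    H.hmul_reflE ((IsRootIsometry.reflE (rs.simple_mem γ hγ)).mul hw) hγ]
  exact if_pos h₂

/-- If `α` is not a multiple of a simple root, pick `γ ∈ Δ` with `(α, γ) > 0`: then
`α' = s_γ α` is a positive root of smaller height and `s_α = s_γ s_{α'} s_γ`, where both
products are length-additive. -/
lemma exists_zOf_eq_reflE {α : V} (hα : rs.IsPos α) :
    ∃ l : List V, (∀ γ ∈ l, γ ∈ rs.Δ) ∧ H.zOf l = reflE α := by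
  refine rs.wellFoundedOn_height.induction hα.1
    (P := fun α => rs.IsPos α → ∃ l : List V, (∀ γ ∈ l, γ ∈ rs.Δ) ∧ H.zOf l = reflE α)
    (fun α _ ih hα => ?_) hα
  by_cases hprop : ∃ γ ∈ rs.Δ, ∃ t : ℝ, α = t • γ
  · obtain ⟨γ, hγ, t, rfl⟩ := hprop
    refine ⟨[γ], by simpa using hγ, ?_⟩
    rw [zOf_singleton, reflE_smul (hα.pos_of_eq_smul (isPos_simple hγ) rfl).ne']
  obtain ⟨γ, hγ, hαγ⟩ := hα.exists_inner_pos
  have hne : ∀ t : ℝ, α ≠ t • γ := fun t ht => hprop ⟨γ, hγ, t, ht⟩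
  have hγ0 := rs.ne_zero γ (rs.simple_mem γ hγ)
  have hα' : rs.IsPos (reflE γ α) := (isPos_reflE_simple_iff hα hγ).mpr hne
  have hheight : rs.height (reflE γ α) < rs.height α := by
    have : 0 < 2 / ⟪γ, γ⟫ * ⟪γ, α⟫ :=
      mul_pos (div_pos two_pos (real_inner_self_pos.mpr hγ0)) (by rwa [real_inner_comm])
    rw [reflE_apply, map_sub, map_smul, rs.height_simple hγ, smul_eq_mul, mul_one]
    linarith
  obtain ⟨l, hl, hzl⟩ := ih _ hα'.1 hheight hα'
  have hconj : reflE γ * reflE (reflE γ α) * reflE γ = reflE α := by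
    rw [mul_assoc, reflE_map (inner_reflE_reflE γ), ← mul_assoc, reflE_mul_self, one_mul]
  have hδ := isPos_neg_reflE_apply_simple hα hγ hαγ hne
  have hδγ : reflE γ (reflE (reflE γ α) γ) = -reflE α γ := by
    rw [← hconj, LinearEquiv.mul_apply, LinearEquiv.mul_apply, reflE_self hγ0, map_neg,
      map_neg, neg_neg]
  refine ⟨γ :: l ++ [γ], by simpa [or_imp, forall_and, hγ] using hl, ?_⟩
  rw [H.zOf_cons_append_singleton hγ hl, hzl, hconj]
  · rw [hzl, reflE_symm, ← reflE_involutive γ (reflE _ γ), hδγ]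
    refine (isPos_reflE_simple_iff hδ hγ).mpr fun t ht => ?_
    obtain ⟨s, hs⟩ := exists_eq_smul_of_reflE_apply_eq_smul hαγ.ne'
      (c := -t) (by rw [neg_smul, ← ht, neg_neg])
    exact hne s hs
  · rw [hzl, hδγ]
    exact hδ

end HeckeData

/-- For `α` a positive root and `β` a simple root, `s_α · s_β = s_β · s_α`
(Hecke product) if and only if `(α, β) ≥ 0`. -/
theorem hecke_commute_iff_inner_nonneg
    {V : Type*} [NormedAddCommGroup V] [InnerProductSpace ℝ V]
    (rs : RootSystemData V) (H : HeckeData rs)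
    (α β : V) (hα : rs.IsPos α) (hβ : β ∈ rs.Δ) :
    H.hmul (reflE α) (reflE β) = H.hmul (reflE β) (reflE α) ↔ 0 ≤ ⟪α, β⟫ := by
  obtain ⟨l, hl, hzl⟩ := H.exists_zOf_eq_reflE hα
  have hleft := H.reflE_hmul_zOf hβ hl
  rw [hzl, reflE_symm] at hleft
  rw [H.hmul_reflE (.reflE hα.1) hβ, hleft, RootSystemData.isPos_reflE_apply_simple_iff hα hβ]
  rcases lt_or_ge 0 ⟪α, β⟫ with hpos | hnonpos
  · simp [hpos.not_ge, hpos.le]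
  rw [if_pos hnonpos, if_pos hnonpos, reflE_mul_comm_iff (rs.ne_zero β (rs.simple_mem β hβ))]
  refine ⟨?_, fun h => .inl (le_antisymm hnonpos h)⟩
  rintro (h | ⟨t, rfl⟩)
  · exact h.ge
  · have ht := hα.pos_of_eq_smul (RootSystemData.isPos_simple hβ) rfl
    rw [real_inner_smul_left]
    exact mul_nonneg ht.le real_inner_self_nonneg
end
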